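/- arXiv:2402.05596 — 7 statements merged into one kernel-verified Lean document; each statement's English description precedes it below -/
import Mathlib

section
/- If F is a Sperner family (antichain) on [n] that is non 2-covering (no two sets in F have union equal to [n]) and contains a set A0 with |A0| ≤ εn for some constant ε ∈ (0,1/2), then |F| ≤ (1 - 1/C(n, ⌊εn⌋)) · C(n, ⌊(n-1)/2⌋) + 1. -/
/-!
The complements of the members of `F` form an intersecting antichain containing the large set
`A₀ᶜ`. Replacing the lowest layer, at a level `r ≤ n / 2`, by its upper shadow keeps the family an
intersecting antichain and does not decrease its size: below the middle by the local LYM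
inequality, and at the middle level `n = 2r` by Katona's cyclic argument, which is where
intersection is needed. Once every set has more than `n / 2` elements (and `A₀ᶜ` is still
there), the LYM inequality gives every set weight at least `1 / C(n, ⌊(n-1)/2⌋)` and `A₀ᶜ`
weight `1 / C(n, |A₀|)`.
-/

open Finset Equiv
open scoped Pointwise Nat FinsetFamily

theorem Nat.choose_le_choose_of_le_half {n a b : ℕ} (hab : a ≤ b) (hb : b ≤ n / 2) :
    n.choose a ≤ n.choose b := by
  induction b, hab using Nat.le_induction with
  | base => rfl
  | succ b hab ih => exact (ih (by omega)).trans (Nat.choose_le_succ_of_lt_half_left (by omega))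

theorem Nat.choose_le_choose_pred_half_of_half_lt {n r : ℕ} (hr : n / 2 < r) (hrn : r ≤ n) :
    n.choose r ≤ n.choose ((n - 1) / 2) := by
  rw [← Nat.choose_symm hrn]
  exact Nat.choose_le_choose_of_le_half (by omega) (by omega)

section Families

variable {α : Type*} [DecidableEq α]

theorem exists_perm_image_eq {s t : Finset α} (h : #s = #t) :
    ∃ σ : Perm α, s.image σ = t := by
  have := Set.powersetCard.isPretransitive (α := α) (n := #s)
  obtain ⟨σ, hσ⟩ := MulAction.exists_smul_eq (Perm α)
    (⟨s, rfl⟩ : Set.powersetCard α #s) ⟨t, h.symm⟩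
  exact ⟨σ, by simpa [smul_finset_def, Perm.smul_def] using congrArg Subtype.val hσ⟩

variable [Fintype α]

theorem card_perm_image_eq_eq_card_perm_image_eq_self {s t : Finset α} (h : #s = #t) :
    #{σ : Perm α | s.image σ = t} = #{σ : Perm α | s.image σ = s} := by
  obtain ⟨τ, rfl⟩ := exists_perm_image_eq h
  refine card_nbij' (τ⁻¹ * ·) (τ * ·) ?_ ?_ (fun _ _ ↦ by simp) (fun _ _ ↦ by simp) <;>
    intro σ hσ <;>
    simp only [coe_filter, Set.mem_ofPred_eq, mem_univ, true_and, Perm.coe_mul] at hσ ⊢ <;>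
    rw [← image_image, hσ]
  simp [image_image]

theorem card_perm_image_eq {s t : Finset α} (h : #s = #t) :
    #{σ : Perm α | s.image σ = t} = (#s)! * (Fintype.card α - #s)! := by
  have hs : #s ≤ Fintype.card α := card_le_univ s
  have hsum :
      (Fintype.card α)! = (Fintype.card α).choose #s * #{σ : Perm α | s.image σ = s} := by
    rw [← Fintype.card_perm, ← card_univ,
      card_eq_sum_card_fiberwise (f := fun σ : Perm α ↦ s.image σ) (t := powersetCard #s univ)
        (fun σ _ ↦ by simp [card_image_of_injective _ σ.injective]),
      sum_congr rfl fun t ht ↦ card_perm_image_eq_eq_card_perm_image_eq_self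
        (mem_powersetCard_univ.1 ht).symm]
    simp
  rw [card_perm_image_eq_eq_card_perm_image_eq_self h]
  refine Nat.eq_of_mul_eq_mul_left (Nat.choose_pos hs) ?_
  rw [← hsum, ← mul_assoc, Nat.choose_mul_factorial_mul_factorial hs]

theorem card_perm_image_mem {s : Finset α} {𝒢 : Finset (Finset α)}
    (h𝒢 : (𝒢 : Set (Finset α)).Sized #s) :
    #{σ : Perm α | s.image σ ∈ 𝒢} = #𝒢 * ((#s)! * (Fintype.card α - #s)!) := by
  rw [card_eq_sum_card_fiberwise (s := {σ : Perm α | s.image σ ∈ 𝒢})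
    (f := fun σ : Perm α ↦ s.image σ) (t := 𝒢) (fun σ hσ ↦ (mem_filter.1 hσ).2),
    sum_congr rfl fun t ht ↦ ?_, sum_const, smul_eq_mul]
  rw [filter_filter, ← card_perm_image_eq (h𝒢 ht).symm]
  congr 1
  exact filter_congr fun σ _ ↦ and_iff_right_of_imp fun h ↦ h ▸ ht

theorem card_le_card_upShadow_of_two_mul_lt {𝒯 : Finset (Finset α)} {r : ℕ}
    (h𝒯 : (𝒯 : Set (Finset α)).Sized r) (hr : 2 * r < Fintype.card α) :
    #𝒯 ≤ #(∂⁺ 𝒯) := by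
  have hlym := card_mul_le_card_shadow_mul h𝒯.compls
  rw [shadow_compls, card_compls, card_compls, Nat.sub_sub_self (by omega)] at hlym
  refine Nat.le_of_mul_le_mul_right (c := Fintype.card α - r)
    (hlym.trans (Nat.mul_le_mul_left _ ?_)) (by omega)
  omega

def liftSlice (𝒜 : Finset (Finset α)) (r : ℕ) : Finset (Finset α) :=
  {s ∈ 𝒜 | #s ≠ r} ∪ ∂⁺ (𝒜 # r)

section LiftSlice

variable {𝒜 : Finset (Finset α)} {r : ℕ}

theorem mem_liftSlice_of_card_ne {s : Finset α} (hs : s ∈ 𝒜) (hr : #s ≠ r) :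
    s ∈ liftSlice 𝒜 r :=
  mem_union_left _ (mem_filter.2 ⟨hs, hr⟩)

theorem exists_subset_of_mem_liftSlice {t : Finset α} (ht : t ∈ liftSlice 𝒜 r) :
    ∃ s ∈ 𝒜, s ⊆ t := by
  rcases mem_union.1 ht with ht | ht
  · exact ⟨t, (mem_filter.1 ht).1, subset_rfl⟩
  · obtain ⟨s, hs, hst, -⟩ := mem_upShadow_iff_exists_mem_card_add_one.1 ht
    exact ⟨s, slice_subset hs, hst⟩

theorem Set.Intersecting.liftSlice (h𝒜 : (𝒜 : Set (Finset α)).Intersecting) :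
    (liftSlice 𝒜 r : Set (Finset α)).Intersecting := by
  intro t ht t' ht' hdisj
  obtain ⟨s, hs, hst⟩ := exists_subset_of_mem_liftSlice ht
  obtain ⟨s', hs', hst'⟩ := exists_subset_of_mem_liftSlice ht'
  exact h𝒜 hs hs' (hdisj.mono hst hst')

variable (hmin : ∀ s ∈ 𝒜, r ≤ #s)
include hmin

theorem le_card_of_mem_liftSlice {t : Finset α} (ht : t ∈ liftSlice 𝒜 r) : r + 1 ≤ #t := by
  rcases mem_union.1 ht with ht | ht
  · have := hmin t (mem_filter.1 ht).1
    have := (mem_filter.1 ht).2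
    omega
  · exact (sized_slice.upShadow ht).ge

theorem IsAntichain.liftSlice (h𝒜 : IsAntichain (· ⊆ ·) (𝒜 : Set (Finset α))) :
    IsAntichain (· ⊆ ·) (liftSlice 𝒜 r : Set (Finset α)) := by
  intro t ht t' ht' hne hsub
  have hlt : #t < #t' := card_lt_card (ssubset_of_subset_of_ne hsub hne)
  rcases mem_union.1 ht with ht | ht <;> rcases mem_union.1 ht' with ht' | ht'
  · exact h𝒜 (mem_filter.1 ht).1 (mem_filter.1 ht').1 hne hsub
  · have := hmin t (mem_filter.1 ht).1
    have := (mem_filter.1 ht).2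
    have := sized_slice.upShadow ht'
    omega
  · obtain ⟨s, hs, hst, -⟩ := mem_upShadow_iff_exists_mem_card_add_one.1 ht
    obtain ⟨hs, hsr⟩ := mem_slice.1 hs
    refine h𝒜 hs (mem_filter.1 ht').1 ?_ (hst.trans hsub)
    rintro rfl
    exact (mem_filter.1 ht').2 hsr
  · have := sized_slice.upShadow ht
    have := sized_slice.upShadow ht'
    omega

omit hmin in
theorem card_le_card_liftSlice (h𝒜 : IsAntichain (· ⊆ ·) (𝒜 : Set (Finset α)))
    (hshadow : #(𝒜 # r) ≤ #(∂⁺ (𝒜 # r))) :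
    #𝒜 ≤ #(liftSlice 𝒜 r) := by
  have hdisj : Disjoint {s ∈ 𝒜 | #s ≠ r} (∂⁺ (𝒜 # r)) := by
    refine disjoint_right.2 fun t ht ht' ↦ ?_
    obtain ⟨s, hs, hst, hcard⟩ := mem_upShadow_iff_exists_mem_card_add_one.1 ht
    refine h𝒜 (slice_subset hs) (mem_filter.1 ht').1 ?_ hst
    rintro rfl
    omega
  have hsplit : #(𝒜 # r) + #{s ∈ 𝒜 | #s ≠ r} = #𝒜 := card_filter_add_card_filter_not _
  rw [liftSlice, card_union_of_disjoint hdisj]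
  omega

end LiftSlice

theorem card_le_of_isAntichain_of_half_lt_card {𝒜 : Finset (Finset α)}
    (h𝒜 : IsAntichain (· ⊆ ·) (𝒜 : Set (Finset α)))
    (hbig : ∀ s ∈ 𝒜, Fintype.card α / 2 < #s) {s₀ : Finset α} (hs₀ : s₀ ∈ 𝒜) :
    (#𝒜 : ℝ) ≤ (1 - 1 / ((Fintype.card α).choose #s₀ : ℝ)) *
      ((Fintype.card α).choose ((Fintype.card α - 1) / 2) : ℝ) + 1 := by
  set N := Fintype.card α
  have hM : (0 : ℝ) < N.choose ((N - 1) / 2) := by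
    exact_mod_cast Nat.choose_pos (by omega)
  have hterm : ∀ s ∈ 𝒜.erase s₀, ((N.choose ((N - 1) / 2) : ℕ) : ℝ)⁻¹ ≤ (N.choose #s : ℝ)⁻¹ :=
    fun s hs ↦ inv_anti₀ (by exact_mod_cast Nat.choose_pos (card_le_univ s)) (by
      exact_mod_cast Nat.choose_le_choose_pred_half_of_half_lt (hbig s (mem_of_mem_erase hs))
        (card_le_univ s))
  have hlym := lubell_yamamoto_meshalkin_inequality_sum_inv_choose (𝕜 := ℝ) h𝒜
  have hsum := sum_le_sum hterm
  rw [← add_sum_erase _ _ hs₀] at hlym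
  rw [sum_const, card_erase_of_mem hs₀, nsmul_eq_mul,
    Nat.cast_pred (card_pos.2 ⟨s₀, hs₀⟩)] at hsum
  have hrest : ((#𝒜 : ℝ) - 1) / N.choose ((N - 1) / 2) ≤ 1 - (N.choose #s₀ : ℝ)⁻¹ := by
    rw [div_eq_mul_inv]
    linarith
  rw [div_le_iff₀ hM] at hrest
  rw [one_div]
  linarith

end Families

theorem sub_natCast_mem_of_forall_sub_one_mem {G : Type*} [AddCommGroupWithOne G] {S : Set G}
    (hS : ∀ s ∈ S, s - 1 ∈ S) {s : G} (hs : s ∈ S) (m : ℕ) : s - m ∈ S := by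
  induction m with
  | zero => simpa using hs
  | succ m ih => rw [Nat.cast_succ, ← sub_sub]; exact hS _ ih

section CycleArc

open Fin.NatCast Fin.CommRing

variable {n : ℕ} [NeZero n]

def cycleArc (j : Fin n) (l : ℕ) : Finset (Fin n) :=
  (range l).image fun i : ℕ ↦ j + (i : Fin n)

theorem card_cycleArc (j : Fin n) {l : ℕ} (hl : l ≤ n) : #(cycleArc j l) = l := by
  rw [cycleArc, card_image_of_injOn, card_range]
  intro a ha b hb hab
  have := congrArg Fin.val (add_left_cancel hab)
  simp only [coe_range, Set.mem_Iio] at ha hb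
  rwa [Fin.val_cast_of_lt (by omega), Fin.val_cast_of_lt (by omega)] at this

theorem cycleArc_add (j : Fin n) (k m : ℕ) :
    cycleArc j (k + m) = cycleArc j k ∪ cycleArc (j + k) m := by
  simp only [cycleArc, range_add, image_union, map_eq_image, image_image]
  congr 1
  refine image_congr fun i _ ↦ ?_
  simp [add_assoc]

theorem cycleArc_subset_cycleArc_succ (j : Fin n) (l : ℕ) :
    cycleArc j l ⊆ cycleArc j (l + 1) := by
  rw [cycleArc_add]
  exact subset_union_left

theorem cycleArc_subset_cycleArc_sub_one_succ (j : Fin n) (l : ℕ) :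
    cycleArc j l ⊆ cycleArc (j - 1) (l + 1) := by
  rw [add_comm, cycleArc_add, Nat.cast_one, sub_add_cancel]
  exact subset_union_right

theorem disjoint_cycleArc_add {k : ℕ} (hn : n = 2 * k) (j : Fin n) :
    Disjoint (cycleArc j k) (cycleArc (j + k) k) := by
  rw [← card_union_eq_card_add_card, ← cycleArc_add, card_cycleArc _ (by omega),
    card_cycleArc _ (by omega), card_cycleArc _ (by omega)]

-- In Katona's circle argument `S` and `W` are the starting points of the arcs of length `k` in a
-- `k`-uniform intersecting family and of length `k + 1` in its upper shadow, along one cyclic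
-- order. Without antipodal points `#S ≤ k`, and some `s ∈ S` has `s - 1 ∉ S`, which `W` gains.
theorem succ_mul_card_le_mul_card {k : ℕ} (hn : n = 2 * k) {S W : Finset (Fin n)}
    (hS : ∀ j ∈ S, j + k ∉ S) (hW : ∀ j ∈ S, j ∈ W ∧ j - 1 ∈ W) :
    (k + 1) * #S ≤ k * #W := by
  have hcard : #S ≤ k := by
    have hdisj : Disjoint S (S.image (· + (k : Fin n))) := by
      rw [disjoint_right]
      intro x hx hx'
      obtain ⟨j, hj, rfl⟩ := mem_image.1 hx
      exact hS j hj hx'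
    have := card_le_univ (S ∪ S.image (· + (k : Fin n)))
    rw [card_union_of_disjoint hdisj, card_image_of_injective _ (add_left_injective _),
      Fintype.card_fin] at this
    omega
  obtain rfl | hne := S.eq_empty_or_nonempty
  · simp
  have hboundary : ∃ s ∈ S, s - 1 ∉ S := by
    by_contra! h
    obtain ⟨s, hs⟩ := hne
    have hk : (s : Fin n) - k = s + k := by
      have h2k : (k : Fin n) + k = 0 := by
        rw [← Nat.cast_add, show k + k = n by omega, Fin.natCast_self]
      rw [sub_eq_add_neg, neg_eq_of_add_eq_zero_left h2k]
    exact hS s hs (hk ▸ sub_natCast_mem_of_forall_sub_one_mem (S := (S : Set (Fin n))) h hs k)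
  obtain ⟨s, hs, hs'⟩ := hboundary
  have hW' : #S + 1 ≤ #W := by
    rw [← card_insert_of_notMem hs']
    refine card_le_card (insert_subset (hW s hs).2 fun j hj ↦ (hW j hj).1)
  nlinarith

theorem sum_card_cycleArc_image_mem {l : ℕ} (hl : l ≤ n) {𝒢 : Finset (Finset (Fin n))}
    (h𝒢 : (𝒢 : Set (Finset (Fin n))).Sized l) :
    ∑ π : Perm (Fin n), #{j | (cycleArc j l).image π ∈ 𝒢} = n * (#𝒢 * (l ! * (n - l)!)) := by
  simp_rw [card_filter]
  rw [sum_comm]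
  simp_rw [← card_filter]
  rw [sum_congr rfl fun j _ ↦ ?_, sum_const, card_univ, Fintype.card_fin, smul_eq_mul]
  rw [card_perm_image_mem (by rwa [card_cycleArc j hl]), card_cycleArc j hl, Fintype.card_fin]

theorem card_le_card_upShadow_of_intersecting_of_eq_two_mul {k : ℕ} (hn : n = 2 * k)
    {𝒯 : Finset (Finset (Fin n))} (h𝒯 : (𝒯 : Set (Finset (Fin n))).Sized k)
    (h𝒯' : (𝒯 : Set (Finset (Fin n))).Intersecting) :
    #𝒯 ≤ #(∂⁺ 𝒯) := by
  have hk : 0 < k := by have := NeZero.ne n; omega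
  have hwindow : ∀ π : Perm (Fin n), (k + 1) * #{j | (cycleArc j k).image π ∈ 𝒯} ≤
      k * #{j | (cycleArc j (k + 1)).image π ∈ ∂⁺ 𝒯} := by
    intro π
    refine succ_mul_card_le_mul_card hn (fun j hj hj' ↦ ?_) (fun j hj ↦ ?_)
    · simp only [mem_filter, mem_univ, true_and] at hj hj'
      exact h𝒯' hj hj' ((disjoint_image π.injective).2 (disjoint_cycleArc_add hn j))
    · simp only [mem_filter, mem_univ, true_and] at hj ⊢
      have hup : ∀ i, cycleArc j k ⊆ cycleArc i (k + 1) →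
          (cycleArc i (k + 1)).image π ∈ ∂⁺ 𝒯 := by
        intro i hi
        refine mem_upShadow_iff_exists_mem_card_add_one.2 ⟨_, hj, image_subset_image hi, ?_⟩
        rw [card_image_of_injective _ π.injective, card_image_of_injective _ π.injective,
          card_cycleArc _ (by omega), card_cycleArc _ (by omega)]
      exact ⟨hup j (cycleArc_subset_cycleArc_succ j k),
        hup (j - 1) (cycleArc_subset_cycleArc_sub_one_succ j k)⟩
  have hsum := sum_le_sum fun π (_ : π ∈ univ) ↦ hwindow π
  rw [← mul_sum, ← mul_sum, sum_card_cycleArc_image_mem (by omega) h𝒯,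
    sum_card_cycleArc_image_mem (by omega) h𝒯.upShadow, show n - k = k by omega,
    show n - (k + 1) = k - 1 by omega] at hsum
  refine Nat.le_of_mul_le_mul_right (c := (k + 1) * n * (k ! * k !)) ?_
    (by have := NeZero.pos n; positivity)
  calc #𝒯 * ((k + 1) * n * (k ! * k !)) = (k + 1) * (n * (#𝒯 * (k ! * k !))) := by ring
    _ ≤ k * (n * (#(∂⁺ 𝒯) * ((k + 1)! * (k - 1)!))) := hsum
    _ = #(∂⁺ 𝒯) * ((k + 1) * n * (k ! * (k * (k - 1)!))) := by rw [Nat.factorial_succ]; ring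
    _ = #(∂⁺ 𝒯) * ((k + 1) * n * (k ! * k !)) := by rw [Nat.mul_factorial_pred hk.ne']

end CycleArc

section PushUp

variable {n : ℕ} [NeZero n]

theorem card_le_card_upShadow_of_le_half {𝒯 : Finset (Finset (Fin n))} {r : ℕ}
    (h𝒯 : (𝒯 : Set (Finset (Fin n))).Sized r) (h𝒯' : (𝒯 : Set (Finset (Fin n))).Intersecting)
    (hr : r ≤ n / 2) :
    #𝒯 ≤ #(∂⁺ 𝒯) := by
  obtain hlt | heq := (show 2 * r < n ∨ n = 2 * r by omega)
  · exact card_le_card_upShadow_of_two_mul_lt h𝒯 (by rwa [Fintype.card_fin])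
  · exact card_le_card_upShadow_of_intersecting_of_eq_two_mul heq h𝒯 h𝒯'

theorem exists_intersecting_antichain_forall_le_card {𝒜 : Finset (Finset (Fin n))}
    (h𝒜 : IsAntichain (· ⊆ ·) (𝒜 : Set (Finset (Fin n))))
    (h𝒜' : (𝒜 : Set (Finset (Fin n))).Intersecting) {r : ℕ} (hr : r ≤ n / 2 + 1) :
    ∃ ℬ : Finset (Finset (Fin n)), IsAntichain (· ⊆ ·) (ℬ : Set (Finset (Fin n))) ∧
      (ℬ : Set (Finset (Fin n))).Intersecting ∧ #𝒜 ≤ #ℬ ∧ (∀ t ∈ ℬ, r ≤ #t) ∧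
      ∀ s ∈ 𝒜, r ≤ #s → s ∈ ℬ := by
  induction r with
  | zero => exact ⟨𝒜, h𝒜, h𝒜', le_rfl, fun _ _ ↦ Nat.zero_le _, fun _ hs _ ↦ hs⟩
  | succ r ih =>
    obtain ⟨ℬ, hℬ, hℬ', hcard, hmin, hkeep⟩ := ih (by omega)
    have hshadow := card_le_card_upShadow_of_le_half (sized_slice (𝒜 := ℬ) (r := r))
      (hℬ'.mono (coe_subset.2 slice_subset)) (by omega)
    exact ⟨liftSlice ℬ r, hℬ.liftSlice hmin, hℬ'.liftSlice,
      hcard.trans (card_le_card_liftSlice hℬ hshadow),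
      fun t ht ↦ le_card_of_mem_liftSlice hmin ht,
      fun s hs hrs ↦ mem_liftSlice_of_card_ne (hkeep s hs (by omega)) (by omega)⟩

theorem card_le_of_isAntichain_of_intersecting {𝒢 : Finset (Finset (Fin n))}
    (h𝒢 : IsAntichain (· ⊆ ·) (𝒢 : Set (Finset (Fin n))))
    (h𝒢' : (𝒢 : Set (Finset (Fin n))).Intersecting) {s₀ : Finset (Fin n)} (hs₀ : s₀ ∈ 𝒢)
    (hs₀n : n / 2 < #s₀) :
    (#𝒢 : ℝ) ≤ (1 - 1 / (n.choose #s₀ : ℝ)) * (n.choose ((n - 1) / 2) : ℝ) + 1 := by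
  obtain ⟨ℬ, hℬ, -, hcard, hbig, hkeep⟩ :=
    exists_intersecting_antichain_forall_le_card h𝒢 h𝒢' le_rfl
  have hbound := card_le_of_isAntichain_of_half_lt_card hℬ
    (fun t ht ↦ by rw [Fintype.card_fin]; exact hbig t ht) (hkeep s₀ hs₀ hs₀n)
  rw [Fintype.card_fin] at hbound
  exact (Nat.cast_le.2 hcard).trans hbound

end PushUp

theorem stmt_0 (n : ℕ) (ε : ℝ) (hε₁ : 0 < ε) (hε₂ : ε < 1/2)
    (F : Finset (Finset (Fin n)))
    (hSperner : ∀ A ∈ F, ∀ B ∈ F, A ≠ B → ¬ A ⊆ B)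
    (hcov : ∀ A ∈ F, ∀ B ∈ F, A ∪ B ≠ Finset.univ)
    (A₀ : Finset (Fin n)) (hA₀ : A₀ ∈ F) (hsmall : (A₀.card : ℝ) ≤ ε * n) :
    (F.card : ℝ) ≤ (1 - 1 / (n.choose ⌊ε * n⌋₊ : ℝ)) * (n.choose ((n - 1) / 2) : ℝ) + 1 := by
  have : NeZero n :=
    ⟨fun hn ↦ hcov A₀ hA₀ A₀ hA₀ (by subst hn; exact eq_univ_of_forall (·.elim0))⟩
  have hfloor : 2 * ⌊ε * n⌋₊ < n := by
    have := Nat.floor_le (a := ε * n) (by positivity)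
    have := mul_lt_mul_of_pos_right hε₂ (Nat.cast_pos.2 (NeZero.pos n) : (0 : ℝ) < n)
    exact_mod_cast (show ((2 * ⌊ε * n⌋₊ : ℕ) : ℝ) < n by push_cast; linarith)
  have hA₀floor : #A₀ ≤ ⌊ε * n⌋₊ := Nat.le_floor hsmall
  have hanti : IsAntichain (· ⊆ ·) (Fᶜˢ : Set (Finset (Fin n))) := by
    rw [coe_compls]
    exact IsAntichain.image_compl hSperner
  have hinter : (Fᶜˢ : Set (Finset (Fin n))).Intersecting := by
    intro s hs t ht hdisj
    refine hcov _ (mem_compls.1 hs) _ (mem_compls.1 ht) ?_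
    rw [← compl_inter, disjoint_iff_inter_eq_empty.1 hdisj, compl_empty]
  have hcompl : #A₀ᶜ = n - #A₀ := by rw [card_compl, Fintype.card_fin]
  have hbound := card_le_of_isAntichain_of_intersecting hanti hinter
    (compl_mem_compls hA₀) (by omega)
  rw [card_compls, hcompl, Nat.choose_symm (by omega)] at hbound
  refine hbound.trans ?_
  gcongr
  · exact_mod_cast Nat.choose_pos (by omega)
  · exact Nat.choose_le_choose_of_le_half hA₀floor (by omega)
end

section
/- If F ⊆ C([n], a) is an intersecting family of a-element subsets of [n], then the shadow ∂F (the family of all (a-1)-subsets obtained by deleting one element from some member of F) satisfies |∂F| ≥ |F|. -/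
/-!
Shifting replaces an element `j` of a set by a smaller absent `i` whenever the result is new to the
family. Such shifts keep the family `a`-uniform and intersecting, keep its size and do not enlarge
its shadow, so we may assume `F` shifted, with ground set `{0, …, n-1}` inside `ℕ`.
If `n < 2a`, the local LYM inequality `|F| a ≤ |∂F| (n - a + 1)` already gives `|F| ≤ |∂F|`.
Otherwise split `F` at the top element `m = n - 1` into the sets avoiding `m` and the link
`{A \ {m} : m ∈ A ∈ F}`. Since `2a ≤ n`, two members of `F` through `m` leave a point `j < m`
uncovered, and shifting `m` to `j` shows that the link of a shifted family is again intersecting.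
Both parts live on `{0, …, m-1}`, their shadows embed disjointly into `∂F`, and induction on `n`
finishes the proof.
-/

open Finset
open scoped FinsetFamily

namespace UV

variable {α : Type*} [DecidableEq α] {𝒜 : Finset (Finset α)} {U A : Finset α} {i j : α}

theorem compress_singleton_of_notMem_of_mem (hi : i ∉ A) (hj : j ∈ A) :
    compress {i} {j} A = insert i (A.erase j) := by
  rw [compress_of_disjoint_of_le (disjoint_singleton_left.2 hi) (singleton_subset_iff.2 hj)]
  ext x
  simp only [sup_eq_union, mem_sdiff, mem_union, mem_singleton, mem_insert, mem_erase]
  grind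

theorem notMem_and_mem_of_compress_ne (h : compress {i} {j} A ≠ A) : i ∉ A ∧ j ∈ A := by
  unfold compress at h
  split_ifs at h with hA
  · simpa using hA
  · exact absurd rfl h

theorem compression_subset_powerset (hU : j ∈ U → i ∈ U) (h𝒜U : 𝒜 ⊆ U.powerset) :
    𝓒 {i} {j} 𝒜 ⊆ U.powerset := by
  intro X hX
  by_cases hX𝒜 : X ∈ 𝒜
  · exact h𝒜U hX𝒜
  have hiX : i ∈ X := singleton_subset_iff.1 (le_of_mem_compression_of_notMem hX hX𝒜)
  have hjX : j ∉ X := disjoint_singleton_left.1 (disjoint_of_mem_compression_of_notMem hX hX𝒜)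
  have hB : (X ∪ {j}) \ {i} ⊆ U :=
    mem_powerset.1 (h𝒜U (sup_sdiff_mem_of_mem_compression_of_notMem hX hX𝒜))
  have hjU : j ∈ U := hB (by simp [ne_of_mem_of_not_mem hiX hjX |>.symm])
  refine mem_powerset.2 fun x hx => ?_
  by_cases hxi : x = i
  · exact hxi ▸ hU hjU
  · exact hB (by simp [hx, hxi])

theorem _root_.Set.Intersecting.uvCompression_singleton
    (h𝒜 : (𝒜 : Set (Finset α)).Intersecting) (i j : α) :
    ((𝓒 {i} {j} 𝒜 : Finset (Finset α)) : Set (Finset α)).Intersecting := by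
  -- If a new `X` missed a kept `Y`, then `(X ∪ {j}) \ {i} ∈ 𝒜` could meet `Y` only in `j`, and
  -- then it would miss the shift `insert i (Y.erase j) ∈ 𝒜` of `Y`.
  have new_meets_kept : ∀ X ∈ 𝓒 {i} {j} 𝒜, X ∉ 𝒜 → ∀ Y ∈ 𝒜, compress {i} {j} Y ∈ 𝒜 →
      ¬Disjoint X Y := by
    intro X hX hX𝒜 Y hY hcY hXY
    have hiX : i ∈ X := singleton_subset_iff.1 (le_of_mem_compression_of_notMem hX hX𝒜)
    have hB : (X ∪ {j}) \ {i} ∈ 𝒜 := sup_sdiff_mem_of_mem_compression_of_notMem hX hX𝒜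
    have hiY : i ∉ Y := disjoint_left.1 hXY hiX
    rw [disjoint_left] at hXY
    by_cases hjY : j ∈ Y
    · rw [compress_singleton_of_notMem_of_mem hiY hjY] at hcY
      refine h𝒜 hB hcY (disjoint_left.2 fun x hx hx' => ?_)
      simp only [mem_sdiff, mem_union, mem_singleton, mem_insert, mem_erase] at hx hx'
      grind
    · refine h𝒜 hB hY (disjoint_left.2 fun x hx hx' => ?_)
      simp only [mem_sdiff, mem_union, mem_singleton] at hx
      grind
  intro X hX Y hY
  rw [mem_coe] at hX hY
  by_cases hX𝒜 : X ∈ 𝒜 <;> by_cases hY𝒜 : Y ∈ 𝒜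
  · exact h𝒜 hX𝒜 hY𝒜
  · have hcX := ((mem_compression.1 hX).resolve_right fun h => h.1 hX𝒜).2
    exact fun h => new_meets_kept Y hY hY𝒜 X hX𝒜 hcX h.symm
  · have hcY := ((mem_compression.1 hY).resolve_right fun h => h.1 hY𝒜).2
    exact new_meets_kept X hX hX𝒜 Y hY𝒜 hcY
  · have hiX := singleton_subset_iff.1 (le_of_mem_compression_of_notMem hX hX𝒜)
    have hiY := singleton_subset_iff.1 (le_of_mem_compression_of_notMem hY hY𝒜)
    exact not_disjoint_iff.2 ⟨i, hiX, hiY⟩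

end UV

namespace Finset

section Family

variable {α β : Type*} [DecidableEq α] [DecidableEq β] {𝒜 : Finset (Finset α)} {U : Finset α}
  {r : ℕ}

theorem shadow_map_mapEmbedding (e : α ↪ β) (𝒜 : Finset (Finset α)) :
    ∂ (𝒜.map (mapEmbedding e).toEmbedding) = (∂ 𝒜).map (mapEmbedding e).toEmbedding := by
  ext t
  simp only [mem_shadow_iff, mem_map, RelEmbedding.coe_toEmbedding, mapEmbedding_apply]
  constructor
  · rintro ⟨_, ⟨s, hs, rfl⟩, _, hx, rfl⟩
    obtain ⟨a, ha, rfl⟩ := mem_map.1 hx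
    exact ⟨s.erase a, ⟨s, hs, a, ha, rfl⟩, map_erase e s a⟩
  · rintro ⟨_, ⟨s, hs, a, ha, rfl⟩, rfl⟩
    exact ⟨s.map e, ⟨s, hs, rfl⟩, e a, mem_map_of_mem e ha, (map_erase e s a).symm⟩

theorem card_mul_le_card_shadow_mul_of_subset_powerset (h𝒜U : 𝒜 ⊆ U.powerset)
    (h𝒜 : (𝒜 : Set (Finset α)).Sized r) : #𝒜 * r ≤ #(∂ 𝒜) * (#U - r + 1) := by
  set e := (mapEmbedding (Function.Embedding.subtype (· ∈ U))).toEmbedding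
  set ℬ : Finset (Finset U) := 𝒜.image (Finset.subtype (· ∈ U))
  have hℬ : ℬ.map e = 𝒜 := by
    rw [map_eq_image, image_image]
    refine (image_congr fun A hA => ?_).trans image_id
    exact subtype_map_of_mem fun x hx => mem_powerset.1 (h𝒜U hA) hx
  have hℬr : (ℬ : Set (Finset U)).Sized r := fun B hB => by
    rw [← card_map (Function.Embedding.subtype (· ∈ U))]
    exact h𝒜 (hℬ ▸ mem_map_of_mem e hB)
  rw [← hℬ, card_map, shadow_map_mapEmbedding, card_map, ← Fintype.card_coe U]
  exact local_lubell_yamamoto_meshalkin_inequality_mul hℬr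

theorem card_le_card_shadow_of_card_lt_two_mul (h𝒜U : 𝒜 ⊆ U.powerset)
    (h𝒜 : (𝒜 : Set (Finset α)).Sized r) (hU : #U < 2 * r) : #𝒜 ≤ #(∂ 𝒜) :=
  Nat.le_of_mul_le_mul_right
    ((card_mul_le_card_shadow_mul_of_subset_powerset h𝒜U h𝒜).trans
      (Nat.mul_le_mul_left _ (by omega))) (by omega)

theorem card_shadow_memberSubfamily_add_card_shadow_nonMemberSubfamily_le (a : α)
    (𝒜 : Finset (Finset α)) :
    #(∂ (𝒜.memberSubfamily a)) + #(∂ (𝒜.nonMemberSubfamily a)) ≤ #(∂ 𝒜) := by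
  have hmem : ∀ t ∈ ∂ (𝒜.memberSubfamily a), a ∉ t ∧ insert a t ∈ ∂ 𝒜 := by
    rintro _ ht
    obtain ⟨s, hs, x, hx, rfl⟩ := mem_shadow_iff.1 ht
    obtain ⟨hsa, has⟩ := mem_memberSubfamily.1 hs
    have hxa : x ≠ a := ne_of_mem_of_not_mem hx has
    refine ⟨fun h => has (mem_of_mem_erase h), ?_⟩
    rw [← erase_insert_of_ne hxa.symm]
    exact erase_mem_shadow hsa (mem_insert_of_mem hx)
  have hnon : ∀ t ∈ ∂ (𝒜.nonMemberSubfamily a), a ∉ t := by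
    rintro _ ht
    obtain ⟨s, hs, x, -, rfl⟩ := mem_shadow_iff.1 ht
    exact fun h => (mem_nonMemberSubfamily.1 hs).2 (mem_of_mem_erase h)
  have hinj : Set.InjOn (insert a) (∂ (𝒜.memberSubfamily a) : Set (Finset α)) :=
    fun s hs t ht hst => by
      rw [← erase_insert (hmem s hs).1, hst, erase_insert (hmem t ht).1]
  have hdisj : Disjoint ((∂ (𝒜.memberSubfamily a)).image (insert a))
      (∂ (𝒜.nonMemberSubfamily a)) := by
    rw [disjoint_left]
    rintro _ ht ht'
    obtain ⟨t, -, rfl⟩ := mem_image.1 ht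
    exact hnon _ ht' (mem_insert_self a t)
  calc #(∂ (𝒜.memberSubfamily a)) + #(∂ (𝒜.nonMemberSubfamily a))
      = #((∂ (𝒜.memberSubfamily a)).image (insert a) ∪ ∂ (𝒜.nonMemberSubfamily a)) := by
        rw [card_union_of_disjoint hdisj, card_image_of_injOn hinj]
    _ ≤ #(∂ 𝒜) := by
        refine card_le_card (union_subset ?_ (shadow_mono (filter_subset _ _)))
        intro _ ht
        obtain ⟨t, ht', rfl⟩ := mem_image.1 ht
        exact (hmem t ht').2

theorem memberSubfamily_subset_powerset_erase (a : α) (h𝒜U : 𝒜 ⊆ U.powerset) :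
    𝒜.memberSubfamily a ⊆ (U.erase a).powerset := by
  intro s hs
  obtain ⟨hsa, has⟩ := mem_memberSubfamily.1 hs
  exact mem_powerset.2 fun x hx => mem_erase.2
    ⟨ne_of_mem_of_not_mem hx has, mem_powerset.1 (h𝒜U hsa) (mem_insert_of_mem hx)⟩

theorem nonMemberSubfamily_subset_powerset_erase (a : α) (h𝒜U : 𝒜 ⊆ U.powerset) :
    𝒜.nonMemberSubfamily a ⊆ (U.erase a).powerset := by
  intro s hs
  obtain ⟨hs, has⟩ := mem_nonMemberSubfamily.1 hs
  exact mem_powerset.2 fun x hx => mem_erase.2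
    ⟨ne_of_mem_of_not_mem hx has, mem_powerset.1 (h𝒜U hs) hx⟩

theorem _root_.Set.Sized.memberSubfamily (a : α) (h𝒜 : (𝒜 : Set (Finset α)).Sized r) :
    ((𝒜.memberSubfamily a : Finset (Finset α)) : Set (Finset α)).Sized (r - 1) := by
  intro s hs
  obtain ⟨hsa, has⟩ := mem_memberSubfamily.1 hs
  have := h𝒜 hsa
  rw [card_insert_of_notMem has] at this
  omega

theorem _root_.Set.Sized.nonMemberSubfamily (a : α) (h𝒜 : (𝒜 : Set (Finset α)).Sized r) :
    ((𝒜.nonMemberSubfamily a : Finset (Finset α)) : Set (Finset α)).Sized r :=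
  h𝒜.mono (coe_subset.2 (filter_subset _ _))

end Family

section Shifted

variable {α : Type*} [LinearOrder α] {𝒜 : Finset (Finset α)}

def IsShifted (𝒜 : Finset (Finset α)) : Prop :=
  ∀ ⦃i j : α⦄, i < j → UV.IsCompressed {i} {j} 𝒜

theorem IsShifted.insert_erase_mem {A : Finset α} {i j : α} (h𝒜 : IsShifted 𝒜) (hA : A ∈ 𝒜)
    (hij : i < j) (hi : i ∉ A) (hj : j ∈ A) : insert i (A.erase j) ∈ 𝒜 := by
  have := UV.compress_mem_compression (u := {i}) (v := {j}) hA
  rwa [(h𝒜 hij).eq, UV.compress_singleton_of_notMem_of_mem hi hj] at this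

theorem IsShifted.intersecting_memberSubfamily {U : Finset α} {m : α} {r : ℕ} (hS : IsShifted 𝒜)
    (h𝒜 : (𝒜 : Set (Finset α)).Intersecting) (hr : (𝒜 : Set (Finset α)).Sized r)
    (h𝒜U : 𝒜 ⊆ U.powerset) (hm : ∀ x ∈ U, x ≤ m) (hU : 2 * r ≤ #U) :
    ((𝒜.memberSubfamily m : Finset (Finset α)) : Set (Finset α)).Intersecting := by
  intro S hS𝒜 T hT𝒜 hST
  obtain ⟨hSm, hmS⟩ := mem_memberSubfamily.1 hS𝒜
  obtain ⟨hTm, hmT⟩ := mem_memberSubfamily.1 hT𝒜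
  have hsub : insert m (S ∪ T) ⊆ U := by
    rw [insert_union_distrib]
    exact union_subset (mem_powerset.1 (h𝒜U hSm)) (mem_powerset.1 (h𝒜U hTm))
  have hcard : #(insert m (S ∪ T)) < #U := by
    have hS := hr hSm
    have hT := hr hTm
    rw [card_insert_of_notMem hmS] at hS
    rw [card_insert_of_notMem hmT] at hT
    rw [card_insert_of_notMem (by simp [hmS, hmT]), card_union_of_disjoint hST]
    omega
  -- a point of `U` missed by both sets lets us shift `m` out of `insert m T`
  obtain ⟨j, hjU, hj⟩ := exists_mem_notMem_of_card_lt_card hcard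
  simp only [mem_insert, mem_union, not_or] at hj
  have hjm : j < m := lt_of_le_of_ne (hm j hjU) hj.1
  have hT' := hS.insert_erase_mem hTm hjm (by simp [hj.1, hj.2.2]) (mem_insert_self m T)
  rw [erase_insert hmT] at hT'
  refine h𝒜 hSm hT' ?_
  simp only [disjoint_insert_left, disjoint_insert_right, mem_insert, not_or]
  exact ⟨⟨hj.1, hj.2.1⟩, hmT, hST⟩

end Shifted

def familyWeight (𝒜 : Finset (Finset ℕ)) : ℕ := ∑ A ∈ 𝒜, ∑ a ∈ A, a

theorem familyWeight_compression_lt {𝒜 : Finset (Finset ℕ)} {i j : ℕ} (hij : i < j)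
    (h : 𝓒 {i} {j} 𝒜 ≠ 𝒜) : familyWeight (𝓒 {i} {j} 𝒜) < familyWeight 𝒜 := by
  have hsplit := filter_union_filter_not_eq (fun A => UV.compress {i} {j} A ∈ 𝒜) 𝒜
  have hmoved : {A ∈ 𝒜 | UV.compress {i} {j} A ∉ 𝒜}.Nonempty := by
    contrapose! h
    rw [UV.compression, filter_image, h, image_empty, union_empty]
    rwa [h, union_empty] at hsplit
  rw [familyWeight, familyWeight, UV.compression, sum_union UV.compress_disjoint, filter_image]
  conv_rhs => rw [← hsplit]
  rw [sum_union (disjoint_filter_filter_not _ _ _), add_lt_add_iff_left,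
    sum_image UV.compress_injOn]
  refine sum_lt_sum_of_nonempty hmoved fun A hA => ?_
  obtain ⟨hA𝒜, hcA⟩ := mem_filter.1 hA
  obtain ⟨hi, hj⟩ := UV.notMem_and_mem_of_compress_ne fun h => hcA (h ▸ hA𝒜)
  rw [UV.compress_singleton_of_notMem_of_mem hi hj, sum_insert fun h => hi (mem_of_mem_erase h),
    ← add_sum_erase A _ hj]
  omega

theorem exists_isShifted (P : Finset (Finset ℕ) → Prop)
    (hP : ∀ ⦃i j : ℕ⦄ ⦃𝒜 : Finset (Finset ℕ)⦄, i < j → P 𝒜 → P (𝓒 {i} {j} 𝒜))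
    (𝒜 : Finset (Finset ℕ)) (h𝒜 : P 𝒜) :
    ∃ ℬ : Finset (Finset ℕ), P ℬ ∧ IsShifted ℬ ∧ #ℬ = #𝒜 ∧ #(∂ ℬ) ≤ #(∂ 𝒜) := by
  by_cases hS : IsShifted 𝒜
  · exact ⟨𝒜, h𝒜, hS, rfl, le_rfl⟩
  obtain ⟨i, j, hij, hne⟩ : ∃ i j : ℕ, i < j ∧ 𝓒 {i} {j} 𝒜 ≠ 𝒜 := by
    simpa [IsShifted, UV.IsCompressed] using hS
  obtain ⟨ℬ, hPℬ, hSℬ, hcard, hshadow⟩ := exists_isShifted P hP _ (hP hij h𝒜)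
  refine ⟨ℬ, hPℬ, hSℬ, hcard.trans (UV.card_compression _ _ _), hshadow.trans ?_⟩
  refine UV.card_shadow_compression_le _ _ fun x hx => ⟨j, mem_singleton_self j, ?_⟩
  rw [mem_singleton.1 hx, erase_singleton, erase_singleton]
  exact UV.isCompressed_self _ _
termination_by familyWeight 𝒜
decreasing_by exact familyWeight_compression_lt hij hne

theorem card_le_card_shadow_of_intersecting {n r : ℕ} {𝒜 : Finset (Finset ℕ)}
    (h𝒜n : 𝒜 ⊆ (range n).powerset) (hr : (𝒜 : Set (Finset ℕ)).Sized r)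
    (h𝒜 : (𝒜 : Set (Finset ℕ)).Intersecting) : #𝒜 ≤ #(∂ 𝒜) := by
  induction n generalizing r 𝒜 with
  | zero =>
    have h𝒜_empty : 𝒜 = ∅ := eq_empty_of_forall_notMem fun A hA =>
      h𝒜.ne_bot hA (by simpa using h𝒜n hA)
    simp [h𝒜_empty]
  | succ m ih =>
    by_cases hdense : m + 1 < 2 * r
    · exact card_le_card_shadow_of_card_lt_two_mul h𝒜n hr (by simpa using hdense)
    obtain ⟨ℬ, ⟨hℬm, hℬr, hℬ⟩, hS, hcard, hshadow⟩ := exists_isShifted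
      (fun ℬ => ℬ ⊆ (range (m + 1)).powerset ∧ (ℬ : Set (Finset ℕ)).Sized r ∧
        (ℬ : Set (Finset ℕ)).Intersecting)
      (fun i j ℬ hij ⟨hℬm, hℬr, hℬ⟩ =>
        ⟨UV.compression_subset_powerset (by simp only [mem_range]; omega) hℬm,
          hℬr.uvCompression (by simp), hℬ.uvCompression_singleton i j⟩)
      𝒜 ⟨h𝒜n, hr, h𝒜⟩
    have hrange : (range (m + 1)).erase m = range m := by
      rw [range_add_one, erase_insert notMem_range_self]
    have hmember := ih
      (hrange ▸ memberSubfamily_subset_powerset_erase m hℬm) (hℬr.memberSubfamily m)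
      (hS.intersecting_memberSubfamily hℬ hℬr hℬm (fun x hx => by simp at hx; omega)
        (by simpa using hdense))
    have hnonmember := ih
      (hrange ▸ nonMemberSubfamily_subset_powerset_erase m hℬm) (hℬr.nonMemberSubfamily m)
      (hℬ.mono (coe_subset.2 (filter_subset _ _)))
    calc #𝒜 = #(ℬ.memberSubfamily m) + #(ℬ.nonMemberSubfamily m) := by
          rw [← hcard, card_memberSubfamily_add_card_nonMemberSubfamily]
      _ ≤ #(∂ (ℬ.memberSubfamily m)) + #(∂ (ℬ.nonMemberSubfamily m)) := by gcongr
      _ ≤ #(∂ ℬ) := card_shadow_memberSubfamily_add_card_shadow_nonMemberSubfamily_le m ℬ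
      _ ≤ #(∂ 𝒜) := hshadow

end Finset

theorem stmt_2 (n a : ℕ) (F : Finset (Finset (Fin n)))
    (hunif : ∀ A ∈ F, A.card = a)
    (hint : ∀ A ∈ F, ∀ B ∈ F, (A ∩ B).Nonempty) :
    F.card ≤ F.shadow.card := by
  set e := (mapEmbedding Fin.valEmbedding).toEmbedding
  have hn : F.map e ⊆ (range n).powerset := by
    intro _ hA
    obtain ⟨A, -, rfl⟩ := mem_map.1 hA
    simp [e, subset_iff]
  have hr : ((F.map e : Finset (Finset ℕ)) : Set (Finset ℕ)).Sized a := by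
    intro _ hA
    obtain ⟨A, hAF, rfl⟩ := mem_map.1 hA
    simpa [e] using hunif A hAF
  have hF : ((F.map e : Finset (Finset ℕ)) : Set (Finset ℕ)).Intersecting := by
    intro _ hA _ hB
    obtain ⟨A, hAF, rfl⟩ := mem_map.1 hA
    obtain ⟨B, hBF, rfl⟩ := mem_map.1 hB
    simpa [e, not_disjoint_iff_nonempty_inter, ← map_inter] using hint A hAF B hBF
  have h := card_le_card_shadow_of_intersecting hn hr hF
  rwa [card_map, shadow_map_mapEmbedding, card_map] at h
end

section
/- A code C = {c^1, …, c^m} ⊆ Q^n with m ≥ 2 and t ≥ 2 is a wide-sense t-frameproof code if and only if for each i ∈ [m], the family of complements of coincidence sets { [n] \ I(i,j) : j ∈ [m], j ≠ i } is a (t-1)-cover-free family with exactly m-1 distinct members. -/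
/-- A family `F` of subsets is `t`-cover-free if no member is contained in the
union of at most `t` other members. -/
def CoverFree {α : Type*} [DecidableEq α] (t : ℕ) (F : Finset (Finset α)) : Prop :=
  ∀ A₀ ∈ F, ∀ S ⊆ F.erase A₀, S.Nonempty → S.card ≤ t → ¬ A₀ ⊆ S.biUnion id

/-- The code with codewords `c 1, …, c m` is wide-sense `t`-frameproof:
for every codeword index `i` and every nonempty set `S` of at most `t` other indices,
there is a coordinate `l` where all codewords indexed by `S` agree and differ from `c i`. -/
def WideSenseFP {m n : ℕ} {Q : Type*} (t : ℕ) (c : Fin m → Fin n → Q) : Prop :=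
  ∀ i : Fin m, ∀ S : Finset (Fin m), i ∉ S → S.Nonempty → S.card ≤ t →
    ∃ l : Fin n, (∀ j ∈ S, c j l ≠ c i l) ∧ ∀ j ∈ S, ∀ j' ∈ S, c j l = c j' l

theorem stmt_5 (n m t : ℕ) (hm : 2 ≤ m) (ht : 2 ≤ t) (Q : Type*) [DecidableEq Q]
    (c : Fin m → Fin n → Q) (hinj : Function.Injective c) :
    WideSenseFP t c ↔
      ∀ i : Fin m,
        CoverFree (t - 1) ((Finset.univ.erase i).image
          (fun j => (Finset.univ.filter fun l => c i l = c j l)ᶜ)) ∧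
        ((Finset.univ.erase i).image
          (fun j => (Finset.univ.filter fun l => c i l = c j l)ᶜ)).card = m - 1 := by
  have memD : ∀ (i j : Fin m) (l : Fin n),
      l ∈ (Finset.univ.filter fun l => c i l = c j l)ᶜ ↔ c i l ≠ c j l := by
    intro i j l; simp
  constructor
  · intro h i
    -- injectivity of j ↦ D i j on univ.erase i
    have hji : Set.InjOn (fun j => (Finset.univ.filter fun l => c i l = c j l)ᶜ)
        ↑(Finset.univ.erase i) := by
      intro a ha b hb hab
      by_contra hne
      simp only [Finset.coe_erase, Finset.coe_univ, Set.mem_diff, Set.mem_univ,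
        Set.mem_singleton_iff, true_and] at ha hb
      have hcard2 : ({i, b} : Finset (Fin m)).card ≤ t :=
        le_trans (le_trans (Finset.card_insert_le _ _) (by simp)) ht
      obtain ⟨l, hl1, hl2⟩ := h a {i, b} (by simp [ha, hne])
        ⟨i, Finset.mem_insert_self _ _⟩ hcard2
      have h1 : c i l ≠ c a l := hl1 i (Finset.mem_insert_self _ _)
      have h2 : c i l = c b l := hl2 i (Finset.mem_insert_self _ _) b (by simp)
      have hab' : (Finset.univ.filter fun l => c i l = c a l)ᶜ =
          (Finset.univ.filter fun l => c i l = c b l)ᶜ := hab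
      have hmem : l ∈ (Finset.univ.filter fun l => c i l = c a l)ᶜ := (memD i a l).2 h1
      rw [hab'] at hmem
      exact (memD i b l).1 hmem h2
    have hcard : ((Finset.univ.erase i).image
          (fun j => (Finset.univ.filter fun l => c i l = c j l)ᶜ)).card = m - 1 := by
      rw [Finset.card_image_of_injOn hji, Finset.card_erase_of_mem (Finset.mem_univ i),
        Finset.card_univ, Fintype.card_fin]
    refine ⟨?_, hcard⟩
    intro A₀ hA₀ S hS hSne hScard hsub
    obtain ⟨j₀, hj₀, hfj₀⟩ := Finset.mem_image.1 hA₀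
    set T := (Finset.univ.erase i).filter
      (fun j => (Finset.univ.filter fun l => c i l = c j l)ᶜ ∈ S) with hT
    have hTimg : T.image (fun j => (Finset.univ.filter fun l => c i l = c j l)ᶜ) = S := by
      apply Finset.Subset.antisymm
      · intro A hA
        obtain ⟨j, hj, rfl⟩ := Finset.mem_image.1 hA
        exact (Finset.mem_filter.1 hj).2
      · intro A hA
        obtain ⟨j, hj, rfl⟩ := Finset.mem_image.1 (Finset.mem_of_mem_erase (hS hA))
        exact Finset.mem_image.2 ⟨j, Finset.mem_filter.2 ⟨hj, hA⟩, rfl⟩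
    have hTcard : T.card = S.card := by
      rw [← hTimg]
      exact (Finset.card_image_of_injOn (hji.mono (by
        intro x hx; exact Finset.mem_coe.2 (Finset.mem_of_mem_filter x hx)))).symm
    have hij₀ : i ≠ j₀ := fun e => (Finset.mem_erase.1 hj₀).1 e.symm
    have hj₀T : j₀ ∉ T := by
      intro hmem
      have := (Finset.mem_filter.1 hmem).2
      rw [hfj₀] at this
      exact (Finset.mem_erase.1 (hS this)).1 rfl
    have hj₀S' : j₀ ∉ insert i T := by
      simp only [Finset.mem_insert]
      rintro (rfl | hc)
      · exact hij₀ rfl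
      · exact hj₀T hc
    have hcardS' : (insert i T).card ≤ t := by
      have h1 := Finset.card_insert_le i T
      omega
    obtain ⟨l, hl1, hl2⟩ := h j₀ (insert i T) hj₀S'
      ⟨i, Finset.mem_insert_self _ _⟩ hcardS'
    have hlA₀ : l ∈ A₀ := by
      rw [← hfj₀]
      exact (memD i j₀ l).2 (hl1 i (Finset.mem_insert_self _ _))
    obtain ⟨A, hAS, hlA⟩ := Finset.mem_biUnion.1 (hsub hlA₀)
    rw [← hTimg] at hAS
    obtain ⟨j, hjT, rfl⟩ := Finset.mem_image.1 hAS
    exact (memD i j l).1 hlA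
      (hl2 i (Finset.mem_insert_self _ _) j (Finset.mem_insert_of_mem hjT))
  · intro h i S hiS hSne hScard
    obtain ⟨j₀, hj₀⟩ := hSne
    have hij₀ : j₀ ≠ i := fun e => hiS (e ▸ hj₀)
    by_cases hT : (S.erase j₀).Nonempty
    · -- use CoverFree at j₀
      obtain ⟨hCF, hc⟩ := h j₀
      have hinj' : Set.InjOn (fun j => (Finset.univ.filter fun l => c j₀ l = c j l)ᶜ)
          ↑(Finset.univ.erase j₀) := by
        rw [← Finset.card_image_iff] at *
        rw [hc, Finset.card_erase_of_mem (Finset.mem_univ j₀),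
          Finset.card_univ, Fintype.card_fin]
      set A₀ := (Finset.univ.filter fun l => c j₀ l = c i l)ᶜ with hA₀def
      have hA₀mem : A₀ ∈ (Finset.univ.erase j₀).image
          (fun j => (Finset.univ.filter fun l => c j₀ l = c j l)ᶜ) :=
        Finset.mem_image.2 ⟨i, Finset.mem_erase.2 ⟨fun e => hij₀ e.symm, Finset.mem_univ _⟩, rfl⟩
      set S' := (S.erase j₀).image (fun j => (Finset.univ.filter fun l => c j₀ l = c j l)ᶜ)
        with hS'def
      have hS'sub : S' ⊆ ((Finset.univ.erase j₀).image
          (fun j => (Finset.univ.filter fun l => c j₀ l = c j l)ᶜ)).erase A₀ := by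
        intro A hA
        obtain ⟨j, hj, rfl⟩ := Finset.mem_image.1 hA
        have hjj₀ : j ≠ j₀ := (Finset.mem_erase.1 hj).1
        have hji' : j ≠ i := fun e => hiS (e ▸ Finset.mem_of_mem_erase hj)
        refine Finset.mem_erase.2 ⟨?_, Finset.mem_image.2
          ⟨j, Finset.mem_erase.2 ⟨hjj₀, Finset.mem_univ _⟩, rfl⟩⟩
        intro hEq
        have hjmem : j ∈ (↑(Finset.univ.erase j₀) : Set (Fin m)) :=
          Finset.mem_coe.2 (Finset.mem_erase.2 ⟨hjj₀, Finset.mem_univ _⟩)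
        have himem : i ∈ (↑(Finset.univ.erase j₀) : Set (Fin m)) :=
          Finset.mem_coe.2 (Finset.mem_erase.2 ⟨hij₀.symm, Finset.mem_univ _⟩)
        exact hji' (hinj' hjmem himem hEq)
      have hS'card : S'.card ≤ t - 1 := by
        calc S'.card ≤ (S.erase j₀).card := Finset.card_image_le
          _ = S.card - 1 := Finset.card_erase_of_mem hj₀
          _ ≤ t - 1 := by omega
      have := hCF A₀ hA₀mem S' hS'sub (hT.image _) hS'card
      obtain ⟨l, hlA₀, hlnot⟩ := Finset.not_subset.1 this
      have hl0 : c j₀ l ≠ c i l := (memD j₀ i l).1 hlA₀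
      have hagree : ∀ j ∈ S, c j l = c j₀ l := by
        intro j hjS
        by_cases hje : j = j₀
        · rw [hje]
        · have hjT' : j ∈ S.erase j₀ := Finset.mem_erase.2 ⟨hje, hjS⟩
          have : l ∉ (Finset.univ.filter fun l => c j₀ l = c j l)ᶜ := by
            intro hmem
            exact hlnot (Finset.mem_biUnion.2
              ⟨_, Finset.mem_image.2 ⟨j, hjT', rfl⟩, hmem⟩)
          have := not_not.1 (fun hc' => this ((memD j₀ j l).2 hc'))
          exact this.symm
      refine ⟨l, ?_, ?_⟩
      · intro j hj e
        exact hl0 (((hagree j hj).symm.trans e))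
      · intro j hj j' hj'
        exact (hagree j hj).trans (hagree j' hj').symm
    · -- S = {j₀}
      have hSsingle : S = {j₀} := by
        apply Finset.eq_singleton_iff_unique_mem.2
        refine ⟨hj₀, fun x hx => ?_⟩
        by_contra hne
        exact hT ⟨x, Finset.mem_erase.2 ⟨hne, hx⟩⟩
      have hne : c j₀ ≠ c i := fun e => hij₀ (hinj e)
      obtain ⟨l, hl⟩ := Function.ne_iff.1 hne
      refine ⟨l, ?_, ?_⟩
      · intro j hj
        rw [hSsingle, Finset.mem_singleton] at hj
        rw [hj]; exact hl
      · intro j hj j' hj'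
        rw [hSsingle, Finset.mem_singleton] at hj hj'
        rw [hj, hj']
end

section
/- Let M be an n × w t-disjunct binary matrix and let u be a column of M with weight |u|. Then deleting column u and all rows in which u has a 1 yields an (n - |u|) × (w - 1) matrix that is (t-1)-disjunct. -/
/-!
A witness row for the reduced matrix comes from applying `t`-disjunctness of `M` to the set
`S ∪ {u}`: a row that contains the target column but avoids `u` survives the row deletion, and
it still avoids every column of `S`.
-/

/-- A binary matrix `M` is `t`-disjunct: for every column `u` and every nonempty set `S`
of at most `t` other columns, the boolean sum of the columns in `S` does not contain `u`. -/
def Disjunct {R C : Type*} (t : ℕ) (M : R → C → Bool) : Prop :=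
  ∀ (u : C) (S : Finset C), u ∉ S → S.Nonempty → S.card ≤ t →
    ∃ r : R, M r u = true ∧ ∀ v ∈ S, M r v = false

open Finset

lemma Fintype.card_subtype_eq_false {α : Type*} [Fintype α] (f : α → Bool) :
    Fintype.card {a // f a = false} = Fintype.card α - #{a | f a = true} := by
  rw [Fintype.card_subtype, ← card_univ,
    ← card_filter_add_card_filter_not (s := univ) (p := fun a => f a = true)]
  simp only [Bool.not_eq_true, Nat.add_sub_cancel_left]

lemma Fintype.card_subtype_ne {α : Type*} [Fintype α] [DecidableEq α] (a : α) :
    Fintype.card {b // b ≠ a} = Fintype.card α - 1 := by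
  rw [Fintype.card_subtype_compl, Fintype.card_subtype_eq]

theorem Disjunct.delete_column {R C : Type*} {t : ℕ} {M : R → C → Bool} (hd : Disjunct t M)
    (u : C) :
    Disjunct (t - 1) fun (r : {r // M r u = false}) (v : {v // v ≠ u}) => M r.1 v.1 := by
  classical
  intro x S hxS hS hSt
  set T : Finset C := insert u (S.map (Function.Embedding.subtype _))
  have hu : u ∉ S.map (Function.Embedding.subtype _) := by simp
  have hxT : x.1 ∉ T := by
    simpa [T, x.2] using hxS
  have hTt : #T ≤ t := by
    rw [card_insert_of_notMem hu, card_map]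
    have := hS.card_pos
    omega
  obtain ⟨r, hrx, hrT⟩ := hd x.1 T hxT (insert_nonempty _ _) hTt
  exact ⟨⟨r, hrT u (mem_insert_self _ _)⟩, hrx,
    fun v hv => hrT v.1 (mem_insert_of_mem (mem_map_of_mem _ hv))⟩

theorem stmt_8 (n w t : ℕ) (M : Fin n → Fin w → Bool) (hd : Disjunct t M) (u : Fin w) :
    Fintype.card {r : Fin n // M r u = false}
        = n - (Finset.univ.filter fun r => M r u = true).card ∧
      Fintype.card {v : Fin w // v ≠ u} = w - 1 ∧
      Disjunct (t - 1)
        (fun (r : {r : Fin n // M r u = false}) (v : {v : Fin w // v ≠ u}) => M r.1 v.1) := by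
  refine ⟨?_, ?_, hd.delete_column u⟩
  · rw [Fintype.card_subtype_eq_false (M · u), Fintype.card_fin]
  · rw [Fintype.card_subtype_ne, Fintype.card_fin]
end

section
/- Let t ≥ 3. If C ⊆ Q^n is a wide-sense t-frameproof code of size m, then m ≤ C(n, ⌈(n - t + 1)/C(t,2)⌉) + t. -/
open Finset

lemma Nat.choose_le_choose_of_le_of_le_half {n k d : ℕ} (hkd : k ≤ d) (hd : d ≤ n / 2) :
    n.choose k ≤ n.choose d := by
  induction d, hkd using Nat.le_induction with
  | base => rfl
  | succ d _ ih => exact (ih (by omega)).trans (Nat.choose_le_succ_of_lt_half_left (by omega))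

lemma IsAntichain.card_le_choose_of_forall_card_le {α : Type*} [Fintype α]
    {ℬ : Finset (Finset α)} {d : ℕ} (hℬ : IsAntichain (· ⊆ ·) (ℬ : Set (Finset α)))
    (hd : d ≤ Fintype.card α / 2) (hsize : ∀ s ∈ ℬ, #s ≤ d) :
    #ℬ ≤ (Fintype.card α).choose d := by
  have hpos : 0 < ((Fintype.card α).choose d : ℚ≥0) :=
    Nat.cast_pos.2 <| Nat.choose_pos (hd.trans (Nat.div_le_self _ _))
  have h := calc
    ∑ _ ∈ ℬ, ((Fintype.card α).choose d : ℚ≥0)⁻¹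
    _ ≤ ∑ s ∈ ℬ, ((Fintype.card α).choose #s : ℚ≥0)⁻¹ := by
      gcongr with s hs
      · exact mod_cast Nat.choose_pos s.card_le_univ
      · exact Nat.choose_le_choose_of_le_of_le_half (hsize s hs) hd
    _ ≤ 1 := lubell_yamamoto_meshalkin_inequality_sum_inv_choose hℬ
  simpa [mul_inv_le_iff₀' hpos] using h

section CoverFree

variable {α : Type*} [DecidableEq α] {𝒜 : Finset (Finset α)} {r d : ℕ}

def IsCoverFree (r : ℕ) (𝒜 : Finset (Finset α)) : Prop :=
  ∀ F ∈ 𝒜, ∀ S ⊆ 𝒜.erase F, #S ≤ r → ¬ F ⊆ S.sup id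

def HasOwnSubset (𝒜 : Finset (Finset α)) (d : ℕ) (F : Finset α) : Prop :=
  ∃ A ⊆ F, #A ≤ d ∧ ∀ G ∈ 𝒜.erase F, ¬ A ⊆ G

lemma card_filter_hasOwnSubset_le [Fintype α] [DecidablePred (HasOwnSubset 𝒜 d)]
    (hd : d ≤ Fintype.card α / 2) :
    #(𝒜.filter (HasOwnSubset 𝒜 d)) ≤ (Fintype.card α).choose d := by
  set 𝒢 := 𝒜.filter (HasOwnSubset 𝒜 d)
  choose! own hown_sub hown_card hown using fun F (hF : F ∈ 𝒢) => (mem_filter.1 hF).2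
  have hkey : ∀ F₁ ∈ 𝒢, ∀ F₂ ∈ 𝒢, own F₁ ⊆ own F₂ → F₁ = F₂ := by
    intro F₁ h₁ F₂ h₂ hsub
    by_contra hne
    exact hown F₁ h₁ F₂ (mem_erase.2 ⟨Ne.symm hne, (mem_filter.1 h₂).1⟩)
      (hsub.trans (hown_sub F₂ h₂))
  have hanti : IsAntichain (· ⊆ ·) (𝒢.image own : Set (Finset α)) := by
    rintro _ hA₁ _ hA₂ hne hsub
    obtain ⟨F₁, h₁, rfl⟩ := mem_image.1 hA₁
    obtain ⟨F₂, h₂, rfl⟩ := mem_image.1 hA₂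
    exact hne (congrArg own (hkey F₁ h₁ F₂ h₂ hsub))
  rw [← card_image_of_injOn fun F₁ h₁ F₂ h₂ h => hkey F₁ h₁ F₂ h₂ h.subset]
  refine hanti.card_le_choose_of_forall_card_le hd ?_
  simpa using hown_card

lemma IsCoverFree.le_card_sdiff_sup (h𝒜 : IsCoverFree r 𝒜) {F : Finset α} (hF : F ∈ 𝒜)
    (hF' : ¬ HasOwnSubset 𝒜 d F) (k : ℕ) {T : Finset (Finset α)} (hT : T ⊆ 𝒜.erase F)
    (hTk : #T + k ≤ r) : k * d + 1 ≤ #(F \ T.sup id) := by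
  induction k generalizing T with
  | zero => simpa using card_pos.2 (sdiff_nonempty.2 (h𝒜 F hF T hT (by omega)))
  | succ k ih =>
    obtain ⟨A, hAU, hA⟩ := exists_subset_card_eq (min_le_right d #(F \ T.sup id))
    obtain ⟨G, hG, hAG⟩ : ∃ G ∈ 𝒜.erase F, A ⊆ G := by
      by_contra! h
      exact hF' ⟨A, hAU.trans sdiff_subset, hA.trans_le (min_le_left _ _), h⟩
    have hinsert := ih (insert_subset hG hT) (by have := card_insert_le G T; omega)
    have hsub : F \ (insert G T).sup id ⊆ (F \ T.sup id) \ A := by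
      intro x hx
      simp only [mem_sdiff, sup_insert, id, sup_eq_union, mem_union, not_or] at hx ⊢
      exact ⟨⟨hx.1, hx.2.2⟩, fun hxA => hx.2.1 (hAG hxA)⟩
    have := card_le_card hsub
    rw [card_sdiff_of_subset hAU] at this
    rw [Nat.succ_mul]
    omega

lemma IsCoverFree.sum_le_card_sup [DecidablePred (HasOwnSubset 𝒜 d)] (h𝒜 : IsCoverFree r 𝒜)
    {ℬ : Finset (Finset α)} (hℬ : ℬ ⊆ 𝒜.filter (¬ HasOwnSubset 𝒜 d ·)) (hℬr : #ℬ ≤ r + 1) :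
    ∑ i ∈ range #ℬ, ((r - i) * d + 1) ≤ #(ℬ.sup id) := by
  induction ℬ using Finset.induction_on with
  | empty => simp
  | insert F ℬ hFℬ ih =>
    obtain ⟨hF, hF'⟩ := mem_filter.1 (hℬ (mem_insert_self F ℬ))
    have hℬ𝒜 : ℬ ⊆ 𝒜.erase F := fun G hG =>
      mem_erase.2 ⟨ne_of_mem_of_not_mem hG hFℬ, (mem_filter.1 (hℬ (mem_insert_of_mem hG))).1⟩
    rw [card_insert_of_notMem hFℬ] at hℬr ⊢
    have hF_fresh := h𝒜.le_card_sdiff_sup hF hF' (r - #ℬ) hℬ𝒜 (by omega)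
    have hℬ_union := ih ((subset_insert F ℬ).trans hℬ) (by omega)
    rw [sum_range_succ, sup_insert, id, sup_eq_union, ← card_sdiff_add_card]
    omega

lemma IsCoverFree.card_filter_not_hasOwnSubset_le [Fintype α] [DecidablePred (HasOwnSubset 𝒜 d)]
    (h𝒜 : IsCoverFree r 𝒜) (hd : Fintype.card α - r ≤ (r + 1).choose 2 * d) :
    #(𝒜.filter (¬ HasOwnSubset 𝒜 d ·)) ≤ r := by
  by_contra! h
  obtain ⟨ℬ, hℬ, hℬcard⟩ := exists_subset_card_eq (Nat.succ_le_of_lt h)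
  have hgauss : ∑ i ∈ range (r + 1), ((r - i) * d + 1) = (r + 1).choose 2 * d + (r + 1) := by
    have hreflect : ∑ i ∈ range (r + 1), (r - i) = ∑ i ∈ range (r + 1), i := by
      simpa using sum_range_reflect id (r + 1)
    rw [sum_add_distrib, ← sum_mul, hreflect, sum_range_id, Nat.choose_two_right]
    simp
  have hsum := h𝒜.sum_le_card_sup hℬ hℬcard.le
  rw [hℬcard, hgauss] at hsum
  have := card_le_univ (ℬ.sup id)
  omega

/-- **Füredi's bound** on the size of a cover-free family. -/
theorem IsCoverFree.card_le [Fintype α] (h𝒜 : IsCoverFree r 𝒜) (hr : 2 ≤ r) :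
    #𝒜 ≤ r + (Fintype.card α).choose ((Fintype.card α - r) ⌈/⌉ (r + 1).choose 2) := by
  classical
  set n := Fintype.card α
  set C := (r + 1).choose 2
  have hC : 3 ≤ C := by simpa using Nat.choose_le_choose 2 (by omega : 3 ≤ r + 1)
  have hCpos : 0 < C := by omega
  have hd : (n - r) ⌈/⌉ C ≤ n / 2 := by
    rw [ceilDiv_le_iff_le_mul hCpos]
    calc n - r ≤ 3 * (n / 2) := by omega
      _ ≤ C * (n / 2) := Nat.mul_le_mul_right _ hC
  have hgood : #(𝒜.filter (HasOwnSubset 𝒜 ((n - r) ⌈/⌉ C))) ≤ n.choose ((n - r) ⌈/⌉ C) :=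
    card_filter_hasOwnSubset_le hd
  have hbad := h𝒜.card_filter_not_hasOwnSubset_le (le_smul_ceilDiv (b := n - r) hCpos)
  rw [← card_filter_add_card_filter_not (HasOwnSubset 𝒜 ((n - r) ⌈/⌉ C))]
  omega

end CoverFree

section Frameproof

variable {m n t : ℕ} {Q : Type*} {c : Fin m → Fin n → Q}

lemma WideSenseFP.injective (hfp : WideSenseFP t c) (ht : 1 ≤ t) : Function.Injective c := by
  intro i j hij
  by_contra hne
  obtain ⟨l, hl, -⟩ := hfp i {j} (by simpa using hne) (singleton_nonempty j) (by simpa)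
  exact hl j (mem_singleton_self j) (by rw [hij])

variable [DecidableEq Q]

def disagreementSet {ι : Type*} [Fintype ι] (x y : ι → Q) : Finset ι :=
  {l | x l ≠ y l}

lemma WideSenseFP.not_subset_sup_disagreementSet (hfp : WideSenseFP t c) {i i₀ : Fin m}
    (hi : i ≠ i₀) {T : Finset (Fin m)} (hiT : i ∉ T) (hT : #T < t) :
    ¬ disagreementSet (c i) (c i₀) ⊆ T.sup fun j => disagreementSet (c j) (c i₀) := by
  obtain ⟨l, hsep, hagree⟩ := hfp i (insert i₀ T) (by simp [hi, hiT])
    (insert_nonempty i₀ T) ((card_insert_le i₀ T).trans hT)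
  intro hsub
  have hl : l ∈ disagreementSet (c i) (c i₀) := by
    simpa [disagreementSet] using fun h => hsep i₀ (mem_insert_self i₀ T) h.symm
  obtain ⟨j, hj, hlj⟩ := mem_sup.1 (hsub hl)
  simp only [disagreementSet, mem_filter, mem_univ, true_and] at hlj
  exact hlj (hagree j (mem_insert_of_mem hj) i₀ (mem_insert_self i₀ T))

lemma WideSenseFP.injective_disagreementSet (hfp : WideSenseFP t c) (ht : 2 ≤ t) (i₀ : Fin m) :
    Function.Injective fun i => disagreementSet (c i) (c i₀) := by
  have key : ∀ i i', i ≠ i₀ → i ≠ i' →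
      disagreementSet (c i) (c i₀) ≠ disagreementSet (c i') (c i₀) := fun i i' hi hii' h =>
    hfp.not_subset_sup_disagreementSet hi (T := {i'}) (by simpa using hii') (by rw [card_singleton]; omega)
      (by simp [h])
  intro i i' h
  by_contra hii'
  rcases eq_or_ne i i₀ with rfl | hi
  · exact key i' i (Ne.symm hii') (Ne.symm hii') h.symm
  · exact key i i' hi hii' h

lemma WideSenseFP.isCoverFree_disagreementSets (hfp : WideSenseFP t c) (ht : 2 ≤ t)
    (i₀ : Fin m) :
    IsCoverFree (t - 1) ((univ.erase i₀).image fun i => disagreementSet (c i) (c i₀)) := by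
  rintro _ hF S hS hSt
  obtain ⟨i, hi, rfl⟩ := mem_image.1 hF
  obtain ⟨T, -, rfl⟩ := subset_image_iff.1 (hS.trans (erase_subset _ _))
  rw [card_image_of_injective _ (hfp.injective_disagreementSet ht i₀)] at hSt
  rw [sup_image]
  refine hfp.not_subset_sup_disagreementSet (ne_of_mem_erase hi) (fun hiT => ?_) (by omega)
  exact (mem_erase.1 (hS (mem_image_of_mem _ hiT))).1 rfl

end Frameproof

theorem stmt_14_general (n m t : ℕ) (ht : 3 ≤ t) (Q : Type*)
    (c : Fin m → Fin n → Q) (hfp : WideSenseFP t c) :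
    m ≤ n.choose ((n - t + 1) ⌈/⌉ t.choose 2) + t := by
  classical
  rcases m with _ | m
  · omega
  have hfuredi := (hfp.isCoverFree_disagreementSets (by omega) 0).card_le (by omega)
  rw [card_image_of_injective _ (hfp.injective_disagreementSet (by omega) 0),
    card_erase_of_mem (mem_univ 0), card_univ, Fintype.card_fin, Fintype.card_fin,
    Nat.sub_add_cancel (by omega : 1 ≤ t)] at hfuredi
  rcases le_or_gt t n with htn | hnt
  · rw [show n - (t - 1) = n - t + 1 by omega] at hfuredi
    omega
  -- here `n - t + 1 = 1` in `ℕ`, so the claim reads `m + 1 ≤ n + t`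
  have hone : (n - t + 1) ⌈/⌉ t.choose 2 = 1 := by
    rw [show n - t + 1 = 1 by omega, Nat.ceilDiv_eq_add_pred_div, Nat.add_sub_cancel_left,
      Nat.div_self (Nat.choose_pos (by omega))]
  rw [hone, Nat.choose_one_right]
  rw [show n - (t - 1) = 0 by omega, zero_ceilDiv, Nat.choose_zero_right] at hfuredi
  rcases Nat.eq_zero_or_pos n with rfl | hn
  · have := Fin.subsingleton_iff_le_one.1 (hfp.injective (by omega)).subsingleton
    omega
  · omega

theorem stmt_14 (n m t : ℕ) (ht : 3 ≤ t) (Q : Type*)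
    (c : Fin m → Fin n → Q) (hinj : Function.Injective c) (hfp : WideSenseFP t c) :
    m ≤ n.choose ((n - t + 1) ⌈/⌉ t.choose 2) + t :=
  stmt_14_general n m t ht Q c hfp
end

section
/- For every t ≥ 3, N'_q(t) ≤ N_q(t), where N_q(t) is the smallest n ≥ 2 such that there exists a wide-sense t-frameproof code in Q^n of size n+1, and N'_q(t) is the smallest n ≥ 3 such that there exists a wide-sense t-frameproof code in Q^n of size n whose representation matrix in standard form is not a permutation matrix. -/
/-- The representation matrix of the code is in standard form: in each row (coordinate),
symbol frequencies are non-increasing in the symbol. -/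
def StandardForm {m n q : ℕ} (c : Fin m → Fin n → Fin q) : Prop :=
  ∀ l : Fin n, ∀ a b : Fin q, a ≤ b →
    (Finset.univ.filter fun i => c i l = b).card ≤
      (Finset.univ.filter fun i => c i l = a).card

/-- `N_q(t)`: the smallest `n ≥ 2` for which there exists a wide-sense `t`-frameproof
code in `Q^n` of size `n + 1`. -/
noncomputable def Nq (q t : ℕ) : ℕ :=
  sInf {n : ℕ | 2 ≤ n ∧ ∃ c : Fin (n + 1) → Fin n → Fin q,
    Function.Injective c ∧ WideSenseFP t c}

/-- `N'_q(t)`: the smallest `n ≥ 3` for which there exists a wide-sense `t`-frameproof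
code in `Q^n` of size `n` whose representation matrix in standard form is not a
permutation matrix. -/
noncomputable def Nq' (q t : ℕ) (hq : 2 ≤ q) : ℕ :=
  sInf {n : ℕ | 3 ≤ n ∧ ∃ c : Fin n → Fin n → Fin q,
    Function.Injective c ∧ WideSenseFP t c ∧ StandardForm c ∧
    ¬ ∃ σ : Equiv.Perm (Fin n), ∀ i l : Fin n,
        c i l = if σ l = i then (⟨1, by omega⟩ : Fin q) else (⟨0, by omega⟩ : Fin q)}


set_option maxHeartbeats 1000000
namespace Stmt16
open Polynomial Finset


/-- difference polynomial between the quadratics encoded by `j` and `i`. -/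
noncomputable def dpoly (p : ℕ) (i j : ℕ) : (ZMod p)[X] :=
  C (((j / p / p % p : ℕ) : ZMod p) - ((i / p / p % p : ℕ) : ZMod p)) * X ^ 2
  + C (((j / p % p : ℕ) : ZMod p) - ((i / p % p : ℕ) : ZMod p)) * X
  + C (((j % p : ℕ) : ZMod p) - ((i % p : ℕ) : ZMod p))

/-- the quadratic function encoded by `i`. -/
noncomputable def fv (p : ℕ) (i : ℕ) (x : ZMod p) : ZMod p :=
  ((i % p : ℕ) : ZMod p) + ((i / p % p : ℕ) : ZMod p) * x + ((i / p / p % p : ℕ) : ZMod p) * x ^ 2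

lemma dpoly_eval (p i j : ℕ) (x : ZMod p) :
    (dpoly p i j).eval x = fv p j x - fv p i x := by
  simp [dpoly, fv]; ring

lemma dpoly_ne_zero {p i j : ℕ} (hp : 0 < p) (hi : i < p ^ 3) (hj : j < p ^ 3)
    (hij : i ≠ j) : dpoly p i j ≠ 0 := by
  intro h0
  have key : ∀ a b : ℕ, ((a : ℕ) : ZMod p) = ((b : ℕ) : ZMod p) → a % p = b % p := by
    intro a b h
    have := congrArg ZMod.val h
    rwa [ZMod.val_natCast, ZMod.val_natCast] at this
  have hc2 : ((j / p / p : ℕ) : ZMod p) = ((i / p / p : ℕ) : ZMod p) := by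
    have : (dpoly p i j).coeff 2 = 0 := by rw [h0]; simp
    rw [dpoly] at this
    simp only [coeff_add, coeff_C_mul, coeff_X_pow, coeff_X, coeff_C] at this
    norm_num at this
    exact sub_eq_zero.mp this
  have hc1 : ((j / p : ℕ) : ZMod p) = ((i / p : ℕ) : ZMod p) := by
    have : (dpoly p i j).coeff 1 = 0 := by rw [h0]; simp
    rw [dpoly] at this
    simp only [coeff_add, coeff_C_mul, coeff_X_pow, coeff_X, coeff_C] at this
    norm_num at this
    exact sub_eq_zero.mp this
  have hc0 : ((j : ℕ) : ZMod p) = ((i : ℕ) : ZMod p) := by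
    have : (dpoly p i j).coeff 0 = 0 := by rw [h0]; simp
    rw [dpoly] at this
    simp only [coeff_add, coeff_C_mul, coeff_X_pow, coeff_X, coeff_C] at this
    norm_num at this
    exact sub_eq_zero.mp this
  have n2 := key _ _ hc2
  have n1 := key _ _ hc1
  have n0 := key _ _ hc0
  have di : i / p / p < p := by
    rw [Nat.div_div_eq_div_mul]
    apply Nat.div_lt_of_lt_mul
    have : p * p * p = p ^ 3 := by ring
    omega
  have dj : j / p / p < p := by
    rw [Nat.div_div_eq_div_mul]
    apply Nat.div_lt_of_lt_mul
    have : p * p * p = p ^ 3 := by ring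
    omega
  rw [Nat.mod_eq_of_lt di, Nat.mod_eq_of_lt dj] at n2
  apply hij
  have ediv : i / p = j / p := by
    rw [← Nat.div_add_mod (i / p) p, ← Nat.div_add_mod (j / p) p, n2, n1]
  rw [← Nat.div_add_mod i p, ← Nat.div_add_mod j p, ediv, n0]


lemma exists_notMem' {α : Type*} [Fintype α] [DecidableEq α] (B : Finset α)
    (h : B.card < Fintype.card α) : ∃ x, x ∉ B := by
  by_contra hc
  push_neg at hc
  have : (Finset.univ : Finset α) ⊆ B := fun x _ => hc x
  have := Finset.card_le_card this
  simp [Finset.card_univ] at this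
  omega

lemma S_nonempty (q t : ℕ) (hq : 2 ≤ q) (ht : 3 ≤ t) :
    {n : ℕ | 2 ≤ n ∧ ∃ c : Fin (n + 1) → Fin n → Fin q,
      Function.Injective c ∧ WideSenseFP t c}.Nonempty := by
  obtain ⟨p, hple, hp⟩ := Nat.exists_infinite_primes (2 * t + 2)
  haveI : Fact p.Prime := ⟨hp⟩
  haveI : NeZero p := ⟨hp.pos.ne'⟩
  have hp0 : 0 < p := hp.pos
  have hp8 : 8 ≤ p := by omega
  have hcube : p * p + 1 ≤ p ^ 3 := by nlinarith
  refine ⟨p * p, by nlinarith, ?_⟩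
  classical
  set n := p * p with hn
  -- the code
  let Xc : Fin n → ZMod p := fun l => ((l.val / p : ℕ) : ZMod p)
  let Yc : Fin n → ZMod p := fun l => ((l.val % p : ℕ) : ZMod p)
  let code : Fin (n + 1) → Fin n → Fin q := fun i l =>
    if fv p i.val (Xc l) = Yc l then ⟨1, by omega⟩ else ⟨0, by omega⟩
  -- encoding coordinates
  have encb : ∀ x y : ZMod p, p * x.val + y.val < n := by
    intro x y
    have hx := ZMod.val_lt x
    have hy := ZMod.val_lt y
    calc p * x.val + y.val < p * x.val + p := by omega
    _ = p * (x.val + 1) := by ring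
    _ ≤ p * p := Nat.mul_le_mul_left p (by omega)
  have encX : ∀ x y : ZMod p, Xc ⟨p * x.val + y.val, encb x y⟩ = x := by
    intro x y
    show (((p * x.val + y.val) / p : ℕ) : ZMod p) = x
    rw [Nat.mul_add_div hp0, Nat.div_eq_of_lt (ZMod.val_lt y)]
    simp [ZMod.natCast_zmod_val]
  have encY : ∀ x y : ZMod p, Yc ⟨p * x.val + y.val, encb x y⟩ = y := by
    intro x y
    show (((p * x.val + y.val) % p : ℕ) : ZMod p) = y
    rw [Nat.mul_add_mod, Nat.mod_eq_of_lt (ZMod.val_lt y)]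
    exact ZMod.natCast_zmod_val y
  -- key separation property
  have key : ∀ i : Fin (n + 1), ∀ S : Finset (Fin (n + 1)), i ∉ S → S.card ≤ t →
      ∃ l : Fin n, code i l = ⟨1, by omega⟩ ∧ ∀ j ∈ S, code j l = ⟨0, by omega⟩ := by
    intro i S hiS hcard
    have hvalt : ∀ j : Fin (n + 1), j.val < p ^ 3 := fun j => by
      have := j.isLt; omega
    set B : Finset (ZMod p) := S.biUnion (fun j => (dpoly p i.val j.val).roots.toFinset) with hB
    have hBcard : B.card < Fintype.card (ZMod p) := by
      have h1 : B.card ≤ ∑ j ∈ S, (dpoly p i.val j.val).roots.toFinset.card :=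
        Finset.card_biUnion_le
      have h2 : ∀ j ∈ S, (dpoly p i.val j.val).roots.toFinset.card ≤ 2 := by
        intro j _
        calc (dpoly p i.val j.val).roots.toFinset.card
            ≤ Multiset.card (dpoly p i.val j.val).roots := Multiset.toFinset_card_le _
          _ ≤ (dpoly p i.val j.val).natDegree := Polynomial.card_roots' _
          _ ≤ 2 := natDegree_quadratic_le
      have h3 : ∑ j ∈ S, (dpoly p i.val j.val).roots.toFinset.card ≤ 2 * S.card := by
        calc ∑ j ∈ S, (dpoly p i.val j.val).roots.toFinset.card ≤ ∑ _j ∈ S, 2 :=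
          Finset.sum_le_sum h2
        _ = 2 * S.card := by rw [Finset.sum_const]; ring
      rw [ZMod.card]
      omega
    obtain ⟨x, hx⟩ := exists_notMem' B hBcard
    refine ⟨⟨p * x.val + (fv p i.val x).val, encb _ _⟩, ?_, ?_⟩
    · show (if _ then _ else _) = _
      rw [encX, encY, if_pos rfl]
    · intro j hj
      have hne : fv p j.val x ≠ fv p i.val x := by
        intro heq
        apply hx
        rw [hB]
        apply Finset.mem_biUnion.2 ⟨j, hj, ?_⟩
        rw [Multiset.mem_toFinset, Polynomial.mem_roots
          (dpoly_ne_zero hp0 (hvalt i) (hvalt j) (fun h => hiS (by rw [Fin.val_injective h]; exact hj)))]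
        show (dpoly p i.val j.val).eval x = 0
        rw [dpoly_eval, heq, sub_self]
      show (if _ then _ else _) = _
      rw [encX, encY, if_neg hne]
  refine ⟨code, ?_, ?_⟩
  · intro a b hab
    by_contra hne
    obtain ⟨l, h1, h0⟩ := key a {b} (by simpa using hne) (by simp; omega)
    have := congrFun hab l
    rw [h1, h0 b (Finset.mem_singleton_self b)] at this
    simp [Fin.ext_iff] at this
  · intro i S hiS hSne hScard
    obtain ⟨l, h1, h0⟩ := key i S hiS hScard
    refine ⟨l, ?_, ?_⟩
    · intro j hj
      rw [h0 j hj, h1]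
      simp [Fin.ext_iff]
    · intro j hj j' hj'
      rw [h0 j hj, h0 j' hj']



lemma no_two {q t : ℕ} (ht : 3 ≤ t) (c : Fin 3 → Fin 2 → Fin q)
    (hfp : WideSenseFP t c) : False := by
  obtain ⟨l0, hA0, hE0⟩ := hfp 0 {1, 2} (by decide) (by decide) (by simp; omega)
  obtain ⟨l1, hA1, hE1⟩ := hfp 1 {0, 2} (by decide) (by decide) (by simp; omega)
  obtain ⟨l2, hA2, hE2⟩ := hfp 2 {0, 1} (by decide) (by decide) (by simp; omega)
  have a0 : c 1 l0 ≠ c 0 l0 := hA0 1 (by decide)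
  have e0 : c 1 l0 = c 2 l0 := hE0 1 (by decide) 2 (by decide)
  have a1 : c 0 l1 ≠ c 1 l1 := hA1 0 (by decide)
  have e1 : c 0 l1 = c 2 l1 := hE1 0 (by decide) 2 (by decide)
  have a2 : c 0 l2 ≠ c 2 l2 := hA2 0 (by decide)
  have e2 : c 0 l2 = c 1 l2 := hE2 0 (by decide) 1 (by decide)
  rcases eq_or_ne l0 l1 with h | h
  · rw [← h] at e1 a1
    exact a0 (e0.trans e1.symm)
  rcases eq_or_ne l0 l2 with h2 | h2
  · rw [← h2] at e2 a2
    exact a0 e2.symm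
  · have h3 : l1 = l2 := by
      have b0 := l0.isLt
      have b1 := l1.isLt
      have b2 := l2.isLt
      have v1 : l0.val ≠ l1.val := fun hh => h (Fin.ext hh)
      have v2 : l0.val ≠ l2.val := fun hh => h2 (Fin.ext hh)
      exact Fin.ext (by omega)
    rw [← h3] at e2
    exact a1 e2



open Finset

lemma main_mem {q t n : ℕ} (hq : 2 ≤ q) (ht : 3 ≤ t) (hn : 3 ≤ n)
    (c : Fin (n + 1) → Fin n → Fin q) (hinj : Function.Injective c)
    (hfp : WideSenseFP t c) :
    ∃ d : Fin n → Fin n → Fin q,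
      Function.Injective d ∧ WideSenseFP t d ∧ StandardForm d ∧
      ¬ ∃ σ : Equiv.Perm (Fin n), ∀ i l : Fin n,
        d i l = if σ l = i then (⟨1, by omega⟩ : Fin q) else (⟨0, by omega⟩ : Fin q) := by
  classical
  set N : Fin n → Fin q → ℕ :=
    fun l a => (Finset.univ.filter fun i : Fin n => c i.castSucc l = a).card with hN
  set π : Fin n → Equiv.Perm (Fin q) := fun l => Tuple.sort (fun a => n - N l a) with hπ
  set C' : Fin (n + 1) → Fin n → Fin q := fun i l => (π l).symm (c i l) with hC'
  have hC'inj : Function.Injective C' := by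
    intro a b hab
    apply hinj
    funext l
    exact (π l).symm.injective (congrFun hab l)
  have hC'fp : WideSenseFP t C' := by
    intro i S hiS hne hcard
    obtain ⟨l, h1, h2⟩ := hfp i S hiS hne hcard
    exact ⟨l, fun j hj hh => h1 j hj ((π l).symm.injective hh),
      fun j hj j' hj' => congrArg (⇑(π l).symm) (h2 j hj j' hj')⟩
  set d : Fin n → Fin n → Fin q := fun i l => C' i.castSucc l with hd
  refine ⟨d, ?_, ?_, ?_, ?_⟩
  · -- injective
    intro a b hab
    exact Fin.castSucc_injective n (hC'inj (funext fun l => congrFun hab l))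
  · -- WSFP
    intro i S hiS hne hcard
    obtain ⟨l, h1, h2⟩ := hC'fp i.castSucc (S.image Fin.castSucc)
      (by
        intro hmem
        obtain ⟨j, hj, hjeq⟩ := Finset.mem_image.1 hmem
        exact hiS ((Fin.castSucc_injective n hjeq) ▸ hj))
      (hne.image _)
      (by rw [Finset.card_image_of_injective _ (Fin.castSucc_injective n)]; exact hcard)
    refine ⟨l, fun j hj => h1 j.castSucc (Finset.mem_image_of_mem _ hj),
      fun j hj j' hj' => h2 j.castSucc (Finset.mem_image_of_mem _ hj)
        j'.castSucc (Finset.mem_image_of_mem _ hj')⟩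
  · -- standard form
    intro l a b hab
    have hcount : ∀ a : Fin q,
        (Finset.univ.filter fun i : Fin n => d i l = a).card = N l ((π l) a) := by
      intro a
      rw [hN]
      congr 1
      apply Finset.filter_congr
      intro i _
      simp only [hd, hC', Equiv.symm_apply_eq]
    rw [hcount a, hcount b]
    have hm := Tuple.monotone_sort (fun a => n - N l a) hab
    simp only [Function.comp_apply] at hm
    have hNa : N l ((π l) a) ≤ n := by
      rw [hN]
      calc (Finset.univ.filter fun i : Fin n => c i.castSucc l = (π l) a).card
          ≤ Finset.univ.card := Finset.card_filter_le _ _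
        _ = n := by simp
    have hNb : N l ((π l) b) ≤ n := by
      rw [hN]
      calc (Finset.univ.filter fun i : Fin n => c i.castSucc l = (π l) b).card
          ≤ Finset.univ.card := Finset.card_filter_le _ _
        _ = n := by simp
    have hm2 : n - N l ((π l) a) ≤ n - N l ((π l) b) := hm
    omega
  · -- not a permutation matrix
    rintro ⟨σ, hσ⟩
    have honez : (⟨1, by omega⟩ : Fin q) ≠ ⟨0, by omega⟩ := by simp
    have hval1 : ∀ i l : Fin n, σ l = i → d i l = ⟨1, by omega⟩ := by
      intro i l h; rw [hσ, if_pos h]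
    have hval0 : ∀ i l : Fin n, σ l ≠ i → d i l = ⟨0, by omega⟩ := by
      intro i l h; rw [hσ, if_neg h]
    set u0 : Fin n := ⟨0, by omega⟩
    set u1 : Fin n := ⟨1, by omega⟩
    set u2 : Fin n := ⟨2, by omega⟩
    have hu01 : u0 ≠ u1 := by simp [u0, u1, Fin.ext_iff]
    have hu02 : u0 ≠ u2 := by simp [u0, u2, Fin.ext_iff]
    have hu12 : u1 ≠ u2 := by simp [u1, u2, Fin.ext_iff]
    -- step 1
    obtain ⟨l1, hA1, hE1⟩ := hC'fp (Fin.last n) {u0.castSucc, u1.castSucc}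
      (by
        simp only [Finset.mem_insert, Finset.mem_singleton]
        push_neg
        exact ⟨(Fin.castSucc_lt_last u0).ne', (Fin.castSucc_lt_last u1).ne'⟩)
      (Finset.insert_nonempty _ _)
      (le_trans Finset.card_le_two (by omega))
    have e01 : d u0 l1 = d u1 l1 :=
      hE1 u0.castSucc (by simp) u1.castSucc (by simp)
    have hd0 : d u0 l1 = ⟨0, by omega⟩ := by
      by_cases h : σ l1 = u0
      · exfalso
        rw [hval1 u0 l1 h, hval0 u1 l1 (fun hh => hu01 (h.symm.trans hh))] at e01
        exact honez e01
      · exact hval0 u0 l1 h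
    have hlast1 : C' u0.castSucc l1 ≠ C' (Fin.last n) l1 :=
      hA1 u0.castSucc (by simp)
    have hlastne : C' (Fin.last n) l1 ≠ ⟨0, by omega⟩ := by
      intro h
      exact hlast1 (by rw [h, ← hd0])
    -- step 2
    set k : Fin n := σ l1 with hk
    set j : Fin n := if k = u0 then u1 else u0 with hj
    set m : Fin n := if k = u2 then u1 else u2 with hm
    have hjk : j ≠ k := by
      rw [hj]
      split_ifs with h
      · rw [h]; exact hu01.symm
      · exact fun hh => h hh.symm
    have hmk : m ≠ k := by
      rw [hm]
      split_ifs with h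
      · rw [h]; exact hu12
      · exact fun hh => h hh.symm
    have hjm : j ≠ m := by
      rw [hj, hm]
      split_ifs with h0 h2
      · exact absurd (h0.symm.trans h2) hu02
      · exact hu12
      · exact hu01
      · exact hu02
    obtain ⟨l2, hA2, hE2⟩ := hC'fp k.castSucc {Fin.last n, j.castSucc, m.castSucc}
      (by
        simp only [Finset.mem_insert, Finset.mem_singleton]
        push_neg
        refine ⟨(Fin.castSucc_lt_last k).ne, ?_, ?_⟩
        · exact fun hh => hjk ((Fin.castSucc_injective n hh).symm)
        · exact fun hh => hmk ((Fin.castSucc_injective n hh).symm))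
      (Finset.insert_nonempty _ _)
      (le_trans Finset.card_le_three ht)
    have ejl : C' (Fin.last n) l2 = d j l2 :=
      hE2 (Fin.last n) (by simp) j.castSucc (by simp)
    have ejm : d j l2 = d m l2 :=
      hE2 j.castSucc (by simp) m.castSucc (by simp)
    have hdj0 : d j l2 = ⟨0, by omega⟩ := by
      by_cases h : σ l2 = j
      · exfalso
        rw [hval1 j l2 h, hval0 m l2 (fun hh => hjm (h.symm.trans hh))] at ejm
        exact honez ejm
      · exact hval0 j l2 h
    have hAlast : C' (Fin.last n) l2 ≠ C' k.castSucc l2 :=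
      hA2 (Fin.last n) (by simp)
    have hdk1 : σ l2 = k := by
      by_contra h
      apply hAlast
      rw [ejl, hdj0]
      show _ = d k l2
      rw [hval0 k l2 h]
    have hl12 : l2 = l1 := σ.injective (by rw [hdk1, hk])
    apply hlastne
    rw [← hl12, ejl, hdj0]


end Stmt16

set_option maxHeartbeats 1000000 in
theorem stmt_16 (q t : ℕ) (hq : 2 ≤ q) (ht : 3 ≤ t) :
    Nq' q t hq ≤ Nq q t := by
  have hmem : (Nq q t) ∈ {n : ℕ | 2 ≤ n ∧ ∃ c : Fin (n + 1) → Fin n → Fin q,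
      Function.Injective c ∧ WideSenseFP t c} := by
    rw [Nq]
    exact Nat.sInf_mem (Stmt16.S_nonempty q t hq ht)
  obtain ⟨h2, hc⟩ := hmem
  rw [show Nq' q t hq = sInf {n : ℕ | 3 ≤ n ∧ ∃ c : Fin n → Fin n → Fin q,
    Function.Injective c ∧ WideSenseFP t c ∧ StandardForm c ∧
    ¬ ∃ σ : Equiv.Perm (Fin n), ∀ i l : Fin n,
        c i l = if σ l = i then (⟨1, by omega⟩ : Fin q) else (⟨0, by omega⟩ : Fin q)} from rfl]
  generalize hgen : Nq q t = n at h2 hc ⊢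
  have hn3 : 3 ≤ n := by
    by_contra h
    have hn2 : n = 2 := by omega
    subst hn2
    obtain ⟨c, hinj, hfp⟩ := hc
    exact Stmt16.no_two ht c hfp
  obtain ⟨c, hinj, hfp⟩ := hc
  obtain ⟨d, hd1, hd2, hd3, hd4⟩ := Stmt16.main_mem hq ht hn3 c hinj hfp
  exact Nat.sInf_le ⟨hn3, d, hd1, hd2, hd3, hd4⟩
end

section
/- A code C = {c^1, …, c^m} ⊆ Q^n is a wide-sense 2-frameproof code if and only if for each i ∈ [m], the coincidence family X_i = { I(i,j) : j ∈ [m], j ≠ i } is a non 2-covering Sperner family with exactly m-1 distinct members. -/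
/-!
Taking `S = {j, k}` (possibly `j = k`), `c i ∈ wdesc S` says exactly `I(j,k) ⊆ I(j,i)`. Hence the
code is wide-sense 2-frameproof iff `I(i,j) ⊆ I(i,k)` forces `k ∈ {i, j}`. For `j, k ≠ i` this is
the Sperner property of `X_i` together with injectivity of `j ↦ I(i,j)`, i.e. `|X_i| = m - 1`; for
`j = i` it is injectivity of the code. Finally a 2-cover `I(i,j) ∪ I(i,k) = [n]` would put `c i`
into `wdesc {j, k}`.
-/

open Finset

theorem Finset.exists_eq_pair_of_card_le_two {ι : Type*} [DecidableEq ι] {S : Finset ι}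
    (hS : S.Nonempty) (hcard : #S ≤ 2) : ∃ j k, S = {j, k} := by
  interval_cases h : #S
  · exact absurd h hS.card_pos.ne'
  · obtain ⟨j, rfl⟩ := card_eq_one.1 h
    exact ⟨j, j, by simp⟩
  · obtain ⟨j, k, -, rfl⟩ := card_eq_two.1 h
    exact ⟨j, k, rfl⟩

section Coincidence

variable {ι α Q : Type*} [Fintype α] [DecidableEq Q] (c : ι → α → Q)

/-- The coincidence set `I(i,j)`. -/
def coincidence (i j : ι) : Finset α := univ.filter fun l => c i l = c j l

/-- The coincidence family `X_i`. -/
def coincidenceFamily [Fintype ι] [DecidableEq ι] [DecidableEq α] (i : ι) : Finset (Finset α) :=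
  (univ.erase i).image (coincidence c i)

/-- `wdesc` of the codewords indexed by `S`. -/
def wideSenseDesc (S : Finset ι) : Set (α → Q) :=
  {x | ∀ l, (∀ j ∈ S, ∀ j' ∈ S, c j l = c j' l) → ∀ j ∈ S, x l = c j l}

def IsWideSenseFrameproof2 : Prop :=
  ∀ S : Finset ι, S.Nonempty → #S ≤ 2 → ∀ i, c i ∈ wideSenseDesc c S → i ∈ S

variable {c}

theorem mem_coincidence {i j : ι} {l : α} : l ∈ coincidence c i j ↔ c i l = c j l := by
  simp [coincidence]

theorem coincidence_eq_univ {i j : ι} : coincidence c i j = univ ↔ c i = c j := by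
  simp [Finset.eq_univ_iff_forall, mem_coincidence, funext_iff]

theorem coincidence_self (i : ι) : coincidence c i i = univ :=
  coincidence_eq_univ.2 rfl

theorem apply_mem_wideSenseDesc_pair_iff [DecidableEq ι] {i j k : ι} :
    c i ∈ wideSenseDesc c {j, k} ↔ coincidence c j k ⊆ coincidence c j i := by
  simp only [wideSenseDesc, Set.mem_ofPred_eq, mem_insert, mem_singleton, forall_eq_or_imp,
    forall_eq, true_and, and_true, subset_iff, mem_coincidence]
  exact ⟨fun h l hl => (h l ⟨hl, hl.symm⟩).1.symm,
    fun h l hl => ⟨(h hl.1).symm, (h hl.1).symm.trans hl.1⟩⟩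

theorem isWideSenseFrameproof2_iff [DecidableEq ι] :
    IsWideSenseFrameproof2 c ↔
      ∀ i j k, coincidence c i j ⊆ coincidence c i k → k = i ∨ k = j := by
  refine ⟨fun h i j k hsub => ?_, fun h S hS hcard i hi => ?_⟩
  · simpa using h {i, j} (insert_nonempty _ _) card_le_two k
      (apply_mem_wideSenseDesc_pair_iff.2 hsub)
  · obtain ⟨j, k, rfl⟩ := S.exists_eq_pair_of_card_le_two hS hcard
    simpa using h j k i (apply_mem_wideSenseDesc_pair_iff.1 hi)

theorem coincidence_subset_of_union_eq_univ [DecidableEq α] {i j k : ι}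
    (h : coincidence c i j ∪ coincidence c i k = univ) :
    coincidence c j k ⊆ coincidence c j i := by
  intro l hl
  have hl' : l ∈ coincidence c i j ∪ coincidence c i k := h ▸ mem_univ l
  rw [mem_coincidence] at hl ⊢
  rcases mem_union.1 hl' with h' | h' <;> rw [mem_coincidence] at h'
  · exact h'.symm
  · exact hl.trans h'.symm

namespace IsWideSenseFrameproof2

variable [DecidableEq ι] (h : IsWideSenseFrameproof2 c)
include h

theorem eq_of_coincidence_subset {i j k : ι} (hk : k ≠ i)
    (hsub : coincidence c i j ⊆ coincidence c i k) : k = j :=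
  (isWideSenseFrameproof2_iff.1 h i j k hsub).resolve_left hk

variable [Fintype ι]

theorem injOn_coincidence (i : ι) : Set.InjOn (coincidence c i) (univ.erase i : Set ι) :=
  fun _ _ _ hk hjk => (h.eq_of_coincidence_subset (mem_erase.1 hk).1 hjk.le).symm

variable [DecidableEq α]

theorem isAntichain_coincidenceFamily (i : ι) :
    IsAntichain (· ⊆ ·) (coincidenceFamily c i : Set (Finset α)) := by
  simp only [coincidenceFamily, coe_image]
  rintro _ ⟨j, -, rfl⟩ _ ⟨k, hk, rfl⟩ hne hsub
  exact hne (congrArg _ (h.eq_of_coincidence_subset (mem_erase.1 hk).1 hsub).symm)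

theorem union_ne_univ (i : ι) :
    ∀ A ∈ coincidenceFamily c i, ∀ B ∈ coincidenceFamily c i, A ∪ B ≠ univ := by
  simp only [coincidenceFamily, mem_image, mem_erase, forall_exists_index, and_imp]
  rintro _ j hj - rfl _ k hk - rfl hcover
  rcases isWideSenseFrameproof2_iff.1 h j k i (coincidence_subset_of_union_eq_univ hcover)
    with rfl | rfl
  exacts [hj rfl, hk rfl]

theorem card_coincidenceFamily (i : ι) :
    #(coincidenceFamily c i) = Fintype.card ι - 1 := by
  rw [coincidenceFamily, card_image_of_injOn (h.injOn_coincidence i),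
    card_erase_of_mem (mem_univ i), card_univ]

end IsWideSenseFrameproof2

theorem isWideSenseFrameproof2_of_isAntichain [Fintype ι] [DecidableEq ι] [DecidableEq α]
    (hc : Function.Injective c)
    (hanti : ∀ i, IsAntichain (· ⊆ ·) (coincidenceFamily c i : Set (Finset α)))
    (hcard : ∀ i, #(coincidenceFamily c i) = Fintype.card ι - 1) :
    IsWideSenseFrameproof2 c := by
  refine isWideSenseFrameproof2_iff.2 fun i j k hsub => ?_
  by_cases hj : j = i
  · subst hj
    rw [coincidence_self, univ_subset_iff, coincidence_eq_univ] at hsub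
    exact Or.inl (hc hsub).symm
  by_cases hk : k = i
  · exact Or.inl hk
  have hinjOn : Set.InjOn (coincidence c i) (univ.erase i : Set ι) := by
    rw [← card_image_iff, ← coincidenceFamily, hcard, card_erase_of_mem (mem_univ i), card_univ]
  have hmem : ∀ {l}, l ≠ i → coincidence c i l ∈ coincidenceFamily c i :=
    fun hl => mem_image_of_mem _ (mem_erase.2 ⟨hl, mem_univ _⟩)
  refine Or.inr (hinjOn (mem_erase.2 ⟨hk, mem_univ _⟩) (mem_erase.2 ⟨hj, mem_univ _⟩) ?_)
  by_contra hne
  exact hanti i (hmem hj) (hmem hk) (Ne.symm hne) hsub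

end Coincidence

theorem stmt_19 (n m : ℕ) (Q : Type*) [DecidableEq Q]
    (c : Fin m → Fin n → Q) (hinj : Function.Injective c) :
    -- `C` is wide-sense 2-frameproof: whenever `c i` lies in the wide-sense
    -- descendant set of the codewords indexed by a nonempty `S` with `|S| ≤ 2`
    -- (i.e. `c i` agrees with them on every coordinate where they all agree),
    -- then `i ∈ S`.
    (∀ S : Finset (Fin m), S.Nonempty → S.card ≤ 2 →
        ∀ i : Fin m,
          (∀ l : Fin n, (∀ j ∈ S, ∀ j' ∈ S, c j l = c j' l) → ∀ j ∈ S, c i l = c j l) →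
          i ∈ S) ↔
      -- for each `i`, the coincidence family `X_i` is a non 2-covering Sperner
      -- family with exactly `m - 1` distinct members
      ∀ i : Fin m,
        (∀ A ∈ (Finset.univ.erase i).image
            (fun j => Finset.univ.filter fun l => c i l = c j l),
          ∀ B ∈ (Finset.univ.erase i).image
            (fun j => Finset.univ.filter fun l => c i l = c j l),
          A ≠ B → ¬ A ⊆ B) ∧
        (∀ A ∈ (Finset.univ.erase i).image
            (fun j => Finset.univ.filter fun l => c i l = c j l),
          ∀ B ∈ (Finset.univ.erase i).image
            (fun j => Finset.univ.filter fun l => c i l = c j l),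
          A ∪ B ≠ Finset.univ) ∧
        ((Finset.univ.erase i).image
          (fun j => Finset.univ.filter fun l => c i l = c j l)).card = m - 1 := by
  show IsWideSenseFrameproof2 c ↔ ∀ i, IsAntichain (· ⊆ ·) (coincidenceFamily c i : Set (Finset (Fin n))) ∧
    (∀ A ∈ coincidenceFamily c i, ∀ B ∈ coincidenceFamily c i, A ∪ B ≠ univ) ∧
    #(coincidenceFamily c i) = m - 1
  refine ⟨fun h i => ⟨h.isAntichain_coincidenceFamily i, h.union_ne_univ i, ?_⟩, fun H => ?_⟩
  · rw [h.card_coincidenceFamily, Fintype.card_fin]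
  · refine isWideSenseFrameproof2_of_isAntichain hinj (fun i => (H i).1) fun i => ?_
    rw [(H i).2.2, Fintype.card_fin]
end
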